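/- arXiv:math/0409397 — 6 statements merged into one kernel-verified Lean document; each statement's English description precedes it below -/
import Mathlib

section
/- Schwarz Lemma (ultrametric): Let L be a complete algebraically closed non-archimedean field, and let φ ∈ L[ζ] be a polynomial mapping a ball B₀ of radius r₀ into a ball B₁ of radius r₁. Then for all ζ₁, ζ₂ ∈ B₀ one has |φ(ζ₁) − φ(ζ₂)| ≤ (r₁/r₀)·|ζ₁ − ζ₂|, and |φ′(ζ₁)| ≤ r₁/r₀ for all ζ₁ ∈ B₀. -/
/-!
Expand `φ(z + ζ) - φ(ζ) = ∑_{k ≥ 1} c_k z^k` around a point `ζ` of the ball; the hypothesis says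
this has norm `≤ r₁` for `‖z‖ ≤ r₀`. At a radius `s` where no two monomials `‖c_k‖ s^k` have the
same size, the ultrametric inequality for the sum is an equality, so `‖c_k‖ s^k ≤ r₁` for all `k`.
Such radii are realised by elements of `L` arbitrarily close to `r₀` (only finitely many radii
are excluded and the value group is dense), so `‖c_k‖ r₀^k ≤ r₁`. For `k = 1` this is the bound
on `φ'(ζ) = c_1`, and `‖c_k z^k‖ ≤ r₁ (‖z‖ / r₀)^k ≤ (r₁ / r₀) ‖z‖` gives the Lipschitz bound.
-/

open Polynomial Metric Set

lemma exists_norm_mem_of_isOpen {L : Type*} [NormedField L]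
    (hdense : ∀ r : ℝ, 0 < r → ∀ ε : ℝ, 0 < ε → ∃ x : L, x ≠ 0 ∧ |‖x‖ - r| < ε)
    {U : Set ℝ} (hU : IsOpen U) {t : ℝ} (ht : t ∈ U) (ht₀ : 0 < t) :
    ∃ x : L, x ≠ 0 ∧ ‖x‖ ∈ U := by
  obtain ⟨δ, hδ, hball⟩ := Metric.isOpen_iff.mp hU t ht
  obtain ⟨x, hx₀, hx⟩ := hdense t ht₀ δ hδ
  exact ⟨x, hx₀, hball (by rwa [mem_ball, Real.dist_eq])⟩

lemma subsingleton_setOf_mul_pow_eq_mul_pow {a b : ℝ} (ha : 0 < a) (hb : 0 < b) {i k : ℕ}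
    (hik : i ≠ k) : {t : ℝ | 0 < t ∧ a * t ^ i = b * t ^ k}.Subsingleton := by
  wlog hlt : i < k generalizing a b i k
  · simpa only [eq_comm] using this hb ha hik.symm (by omega)
  have hpow : ∀ t : ℝ, 0 < t → a * t ^ i = b * t ^ k → t ^ (k - i) = a / b := by
    intro t ht h
    rw [← Nat.sub_add_cancel hlt.le, pow_add, ← mul_assoc] at h
    rw [eq_div_iff hb.ne', mul_comm]
    exact (mul_right_cancel₀ (pow_ne_zero i ht.ne') h).symm
  rintro t ⟨ht, hteq⟩ u ⟨hu, hueq⟩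
  exact (pow_left_inj₀ ht.le hu.le (by omega)).mp ((hpow t ht hteq).trans (hpow u hu hueq).symm)

namespace Polynomial

variable {L : Type*} [NormedField L]

def tieRadii (p : L[X]) : Set ℝ :=
  ⋃ ik ∈ p.support.offDiag, {t | 0 < t ∧ ‖p.coeff ik.1‖ * t ^ ik.1 = ‖p.coeff ik.2‖ * t ^ ik.2}

lemma finite_tieRadii (p : L[X]) : p.tieRadii.Finite := by
  refine p.support.offDiag.finite_toSet.biUnion fun ik hik => ?_
  obtain ⟨hi, hk, hik⟩ := Finset.mem_offDiag.mp hik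
  exact (subsingleton_setOf_mul_pow_eq_mul_pow (norm_pos_iff.mpr (mem_support_iff.mp hi))
    (norm_pos_iff.mpr (mem_support_iff.mp hk)) hik).finite

lemma norm_coeff_mul_pow_le_norm_eval [IsUltrametricDist L] (p : L[X]) {x : L} (hx₀ : x ≠ 0)
    (hx : ‖x‖ ∉ p.tieRadii) (j : ℕ) : ‖p.coeff j‖ * ‖x‖ ^ j ≤ ‖p.eval x‖ := by
  by_cases hj : j ∈ p.support
  swap
  · simp [notMem_support_iff.mp hj]
  have hpair : (p.support : Set ℕ).Pairwise
      fun i k => ‖p.coeff i * x ^ i‖ ≠ ‖p.coeff k * x ^ k‖ := by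
    intro i hi k hk hik heq
    refine hx (mem_iUnion₂.mpr ⟨(i, k), Finset.mem_offDiag.mpr ⟨hi, hk, hik⟩, ?_⟩)
    exact ⟨norm_pos_iff.mpr hx₀, by simpa only [norm_mul, norm_pow] using heq⟩
  rw [eval_eq_sum, sum_def, IsUltrametricDist.norm_sum_eq_sup'_of_pairwise_ne ⟨j, hj⟩ hpair]
  simpa only [norm_mul, norm_pow] using Finset.le_sup' (fun i => ‖p.coeff i * x ^ i‖) hj

lemma norm_coeff_mul_pow_le_of_forall_norm_eval_le [IsUltrametricDist L]
    (hdense : ∀ r : ℝ, 0 < r → ∀ ε : ℝ, 0 < ε → ∃ x : L, x ≠ 0 ∧ |‖x‖ - r| < ε)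
    (p : L[X]) {r M : ℝ} (hr : 0 < r) (hM : ∀ z : L, ‖z‖ ≤ r → ‖p.eval z‖ ≤ M) (j : ℕ) :
    ‖p.coeff j‖ * r ^ j ≤ M := by
  set good := norm '' {x : L | x ≠ 0 ∧ ‖x‖ ≤ r ∧ ‖x‖ ∉ p.tieRadii}
  have hgood : good ⊆ {s | ‖p.coeff j‖ * s ^ j ≤ M} := by
    rintro _ ⟨x, ⟨hx₀, hxr, hx⟩, rfl⟩
    exact (p.norm_coeff_mul_pow_le_norm_eval hx₀ hx j).trans (hM x hxr)
  have hr_mem : r ∈ closure good := by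
    refine Metric.mem_closure_iff.mpr fun ε hε => ?_
    have hU : IsOpen (Ioo (max (r - ε) 0) r \ p.tieRadii) :=
      isOpen_Ioo.sdiff p.finite_tieRadii.isClosed
    obtain ⟨t, ht⟩ :=
      ((Ioo_infinite (max_lt (sub_lt_self r hε) hr)).sdiff p.finite_tieRadii).nonempty
    obtain ⟨x, hx₀, ⟨hxl, hxr⟩, hx⟩ :=
      exists_norm_mem_of_isOpen hdense hU ht ((le_max_right _ _).trans_lt ht.1.1)
    refine ⟨‖x‖, ⟨x, ⟨hx₀, hxr.le, hx⟩, rfl⟩, ?_⟩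
    rw [Real.dist_eq, abs_lt]
    constructor <;> linarith [le_max_left (r - ε) 0]
  exact (isClosed_le (by fun_prop) continuous_const).closure_subset_iff.mpr hgood hr_mem

lemma norm_eval_le_of_coeff_zero_eq_zero [IsUltrametricDist L] {p : L[X]} (h₀ : p.coeff 0 = 0)
    {r M : ℝ} (hr : 0 < r) (hM : ∀ k, ‖p.coeff k‖ * r ^ k ≤ M) {z : L} (hz : ‖z‖ ≤ r) :
    ‖p.eval z‖ ≤ M / r * ‖z‖ := by
  have hM₀ : 0 ≤ M := (norm_nonneg _).trans (by simpa using hM 0)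
  have hρ₁ : ‖z‖ / r ≤ 1 := (div_le_one hr).mpr hz
  rw [eval_eq_sum_range]
  refine IsUltrametricDist.norm_sum_le_of_forall_le_of_nonneg (by positivity) fun k _ => ?_
  rcases eq_or_ne k 0 with rfl | hk
  · simp only [h₀, zero_mul, norm_zero]
    positivity
  calc ‖p.coeff k * z ^ k‖ = ‖p.coeff k‖ * r ^ k * (‖z‖ / r) ^ k := by
        rw [norm_mul, norm_pow, div_pow, mul_assoc, mul_div_cancel₀ _ (pow_ne_zero k hr.ne')]
    _ ≤ M * (‖z‖ / r) := mul_le_mul (hM k) (pow_le_of_le_one (by positivity) hρ₁ hk)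
        (by positivity) hM₀
    _ = M / r * ‖z‖ := by ring

end Polynomial

theorem schwarz_lemma_general {L : Type*} [NormedField L] [IsUltrametricDist L]
    (hdense : ∀ r : ℝ, 0 < r → ∀ ε : ℝ, 0 < ε → ∃ x : L, x ≠ 0 ∧ |‖x‖ - r| < ε)
    (φ : Polynomial L) (a₀ a₁ : L) (r₀ r₁ : ℝ) (hr₀ : 0 < r₀)
    (hmap : ∀ z ∈ Metric.closedBall a₀ r₀, φ.eval z ∈ Metric.closedBall a₁ r₁) :
    (∀ ζ₁ ∈ Metric.closedBall a₀ r₀, ∀ ζ₂ ∈ Metric.closedBall a₀ r₀,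
      ‖φ.eval ζ₁ - φ.eval ζ₂‖ ≤ (r₁ / r₀) * ‖ζ₁ - ζ₂‖) ∧
    (∀ ζ₁ ∈ Metric.closedBall a₀ r₀,
      ‖(Polynomial.derivative φ).eval ζ₁‖ ≤ r₁ / r₀) := by
  set q : L → L[X] := fun ζ => taylor ζ φ - C (φ.eval ζ)
  have hq_eval : ∀ ζ z, (q ζ).eval z = φ.eval (z + ζ) - φ.eval ζ := by simp [q, taylor_eval]
  have hq_coeff : ∀ ζ ∈ closedBall a₀ r₀, ∀ k, ‖(q ζ).coeff k‖ * r₀ ^ k ≤ r₁ := by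
    intro ζ hζ
    refine norm_coeff_mul_pow_le_of_forall_norm_eval_le hdense _ hr₀ fun z hz => ?_
    have hzζ : z + ζ ∈ closedBall a₀ r₀ := by
      rw [IsUltrametricDist.closedBall_eq_of_mem hζ, mem_closedBall, dist_eq_norm]
      simpa using hz
    have hφ := hmap _ hzζ
    rw [IsUltrametricDist.closedBall_eq_of_mem (hmap ζ hζ), mem_closedBall, dist_eq_norm] at hφ
    rwa [hq_eval]
  refine ⟨fun ζ₁ h₁ ζ₂ h₂ => ?_, fun ζ hζ => ?_⟩
  · have h₀ : (q ζ₂).coeff 0 = 0 := by simp [q, taylor_coeff_zero]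
    rw [IsUltrametricDist.closedBall_eq_of_mem h₂, mem_closedBall, dist_eq_norm] at h₁
    simpa [hq_eval] using norm_eval_le_of_coeff_zero_eq_zero h₀ hr₀ (hq_coeff ζ₂ h₂) h₁
  · have h := hq_coeff ζ hζ 1
    simp only [q, coeff_sub, coeff_C, taylor_coeff_one] at h
    rw [le_div_iff₀ hr₀]
    simpa using h

/-- **Schwarz Lemma (ultrametric).** If a polynomial maps the closed ball of radius `r₀`
into the closed ball of radius `r₁`, then it is `(r₁/r₀)`-Lipschitz there and its
derivative is bounded by `r₁/r₀`. -/
theorem schwarz_lemma {L : Type*} [NormedField L] [IsUltrametricDist L]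
    [CompleteSpace L] [IsAlgClosed L]
    (hdense : ∀ r : ℝ, 0 < r → ∀ ε : ℝ, 0 < ε → ∃ x : L, x ≠ 0 ∧ |‖x‖ - r| < ε)
    (φ : Polynomial L) (a₀ a₁ : L) (r₀ r₁ : ℝ) (hr₀ : 0 < r₀) (hr₁ : 0 < r₁)
    (hmap : ∀ z ∈ Metric.closedBall a₀ r₀, φ.eval z ∈ Metric.closedBall a₁ r₁) :
    (∀ ζ₁ ∈ Metric.closedBall a₀ r₀, ∀ ζ₂ ∈ Metric.closedBall a₀ r₀,
      ‖φ.eval ζ₁ - φ.eval ζ₂‖ ≤ (r₁ / r₀) * ‖ζ₁ - ζ₂‖) ∧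
    (∀ ζ₁ ∈ Metric.closedBall a₀ r₀,
      ‖(Polynomial.derivative φ).eval ζ₁‖ ≤ r₁ / r₀) :=
  schwarz_lemma_general hdense φ a₀ a₁ r₀ r₁ hr₀ hmap
end

section
/- Let L be a complete algebraically closed non-archimedean field of residual characteristic zero and φ ∈ L[ζ] a polynomial mapping a closed ball B onto a closed ball B′ with a well-defined degree deg_B(φ). Then deg_B(φ) − 1 equals the sum over all critical points ω of φ lying in B of their multiplicities, i.e. deg_B(φ) − 1 = Σ_{ζ ∈ B} (deg_ζ(φ) − 1). -/
open Polynomial Metric Set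

/-- The filled Julia set: points whose forward orbit does not escape to infinity. -/
def filledJulia {L : Type*} [NormedField L] (φ : Polynomial L) : Set L :=
  {z | ¬ Filter.Tendsto (fun n => ‖(fun w => φ.eval w)^[n] z‖) Filter.atTop Filter.atTop}

/-- The Julia set, the boundary of the filled Julia set. -/
def juliaSet {L : Type*} [NormedField L] (φ : Polynomial L) : Set L :=
  frontier (filledJulia φ)

/-- The standard escape radius `R_φ`. -/
noncomputable def escapeRadius {L : Type*} [NormedField L] (φ : Polynomial L) : ℝ :=
  max (‖φ.leadingCoeff⁻¹‖ ^ ((1 : ℝ) / ((φ.natDegree : ℝ) - 1)))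
    (⨆ i : Finset.range φ.natDegree,
      ‖φ.coeff i / φ.leadingCoeff‖ ^ ((1 : ℝ) / ((φ.natDegree : ℝ) - (i : ℕ))))

/-- A (closed) ball of positive radius. -/
def IsClosedBall {L : Type*} [NormedField L] (B : Set L) : Prop :=
  ∃ a : L, ∃ r : ℝ, 0 < r ∧ B = Metric.closedBall a r

/-- A dynamical ball of level `n`: a maximal closed ball inside `φ^{-n}(D₀)` where
`D₀ = B⁺_{R_φ}(0)` is the level-0 ball. -/
def IsDynBall {L : Type*} [NormedField L] (φ : Polynomial L) (n : ℕ) (B : Set L) : Prop :=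
  IsClosedBall B ∧
    B ⊆ (fun z => φ.eval z)^[n] ⁻¹' (Metric.closedBall 0 (escapeRadius φ)) ∧
    ∀ B', IsClosedBall B' → B ⊆ B' →
      B' ⊆ (fun z => φ.eval z)^[n] ⁻¹' (Metric.closedBall 0 (escapeRadius φ)) → B' = B

/-- An end: a nested sequence of dynamical balls, one of each level. -/
def IsEnd {L : Type*} [NormedField L] (φ : Polynomial L) (E : ℕ → Set L) : Prop :=
  ∀ n, IsDynBall φ n (E n) ∧ E (n + 1) ⊆ E n

/-- The local degree `deg_z(φ)`: the multiplicity of `z` as a root of `φ - φ(z)`. -/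
noncomputable def localDeg {K : Type*} [CommRing K] (φ : Polynomial K) (z : K) : ℕ :=
  Polynomial.rootMultiplicity z (φ - Polynomial.C (φ.eval z))

/-- `φ : B → B'` has a well-defined degree `d`: every point of `B'` has exactly `d`
preimages in `B` counted with local degree. -/
def HasDegOn {K : Type*} [CommRing K] (φ : Polynomial K) (B B' : Set K) (d : ℕ) : Prop :=
  1 ≤ d ∧ ∀ w ∈ B', (∑ᶠ z ∈ {z ∈ B | φ.eval z = w}, localDeg φ z) = d

/-- A set is infraconnected if it cannot be split by two disjoint closed balls. -/
def Infraconnected {L : Type*} [NormedField L] (X : Set L) : Prop :=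
  ∀ (a₀ : L) (r₀ : ℝ) (a₁ : L) (r₁ : ℝ),
    Disjoint (Metric.closedBall a₀ r₀) (Metric.closedBall a₁ r₁) →
    X ⊆ Metric.closedBall a₀ r₀ ∪ Metric.closedBall a₁ r₁ →
    X ⊆ Metric.closedBall a₀ r₀ ∨ X ⊆ Metric.closedBall a₁ r₁

/-- The infraconnected component of `z` in the filled Julia set: the intersection of all
dynamical balls containing `z`. -/
def infraComp {L : Type*} [NormedField L] (φ : Polynomial L) (z : L) : Set L :=
  {w | ∀ n B, IsDynBall φ n B → z ∈ B → w ∈ B}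

/-- The `p`-th iterate of `φ` as a polynomial. -/
noncomputable def polyIter {L : Type*} [CommRing L] (φ : Polynomial L) : ℕ → Polynomial L
  | 0 => Polynomial.X
  | n + 1 => φ.comp (polyIter φ n)

/-- The cubic family `φ_{α,β}(ζ) = ζ³ - 3α²ζ + β`. -/
noncomputable def cubic {L : Type*} [NormedField L] (α β : L) : Polynomial L :=
  Polynomial.X ^ 3 - Polynomial.C (3 * α ^ 2) * Polynomial.X + Polynomial.C β

/-!
Put `ψ = φ - φ(a)`. The fibre condition at `φ(a)` says that `d` is the number of zeros of `ψ` in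
`B = closedBall a r`, and in characteristic zero `deg_ζ φ - 1` is the multiplicity of `ζ` as a zero
of `φ'`, so the right-hand side counts the zeros of `φ' = ψ'` in `B`.

After recentring at `a`, the number of zeros of a polynomial `∑ c_j X^j` in the closed ball of
radius `r` is its dominant index, the largest `k` at which `‖c_k‖ r^k` is maximal: this is clear
for linear factors and dominant indices add under products by the ultrametric inequality. As
`‖n‖ = 1` for every nonzero integer `n`, the terms of `ψ'` are those of `ψ` shifted down by one
index and divided by `r`, so the dominant index of `ψ'` is one less than that of `ψ`, which is
positive because `ψ(a) = 0`.
-/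

section Dominance

open Finset.HasAntidiagonal

variable {L : Type*} [NormedField L] {p q : L[X]} {r : ℝ} {k m : ℕ}

/-- In Newton-polygon terms, `k` is the number of zeros of `p` in `closedBall 0 r`
(see `isDominantIndex_taylor`). -/
structure IsDominantIndex (p : L[X]) (r : ℝ) (k : ℕ) : Prop where
  le : ∀ j, ‖p.coeff j‖ * r ^ j ≤ ‖p.coeff k‖ * r ^ k
  lt : ∀ j, k < j → ‖p.coeff j‖ * r ^ j < ‖p.coeff k‖ * r ^ k

theorem norm_coeff_mul_coeff_mul_pow (p q : L[X]) (r : ℝ) (i j : ℕ) :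
    ‖p.coeff i * q.coeff j‖ * r ^ (i + j) = (‖p.coeff i‖ * r ^ i) * (‖q.coeff j‖ * r ^ j) := by
  rw [norm_mul, pow_add]
  ring

namespace IsDominantIndex

theorem pos (h : IsDominantIndex p r k) (hr : 0 ≤ r) : 0 < ‖p.coeff k‖ * r ^ k :=
  (by positivity : 0 ≤ ‖p.coeff (k + 1)‖ * r ^ (k + 1)).trans_lt (h.lt _ k.lt_succ_self)

theorem unique (h : IsDominantIndex p r k) (h' : IsDominantIndex p r m) : k = m := by
  by_contra hne
  rcases Nat.lt_or_gt_of_ne hne with hlt | hlt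
  · exact (h.lt m hlt).not_ge (h'.le k)
  · exact (h'.lt k hlt).not_ge (h.le m)

theorem ne_zero_of_coeff_zero_eq_zero (h : IsDominantIndex p r k) (hr : 0 ≤ r)
    (h0 : p.coeff 0 = 0) : k ≠ 0 := by
  rintro rfl
  simpa [h0] using h.pos hr

theorem derivative (hnat : ∀ n : ℕ, n ≠ 0 → ‖(n : L)‖ = 1) (hr : 0 < r)
    (h : IsDominantIndex p r (k + 1)) : IsDominantIndex (Polynomial.derivative p) r k := by
  have hcoeff : ∀ j,
      ‖(Polynomial.derivative p).coeff j‖ * r ^ j * r = ‖p.coeff (j + 1)‖ * r ^ (j + 1) := by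
    intro j
    rw [coeff_derivative, norm_mul, ← Nat.cast_succ, hnat _ j.succ_ne_zero, pow_succ]
    ring
  refine ⟨fun j => le_of_mul_le_mul_right ?_ hr, fun j hj => lt_of_mul_lt_mul_right ?_ hr.le⟩
  · rw [hcoeff, hcoeff]
    exact h.le _
  · rw [hcoeff, hcoeff]
    exact h.lt _ (by omega)

theorem norm_coeff_mul_coeff_mul_pow_le (hp : IsDominantIndex p r k) (hq : IsDominantIndex q r m)
    (hr : 0 ≤ r) (i j : ℕ) :
    ‖p.coeff i * q.coeff j‖ * r ^ (i + j) ≤ (‖p.coeff k‖ * r ^ k) * (‖q.coeff m‖ * r ^ m) := by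
  rw [norm_coeff_mul_coeff_mul_pow]
  exact mul_le_mul (hp.le i) (hq.le j) (by positivity) (hp.pos hr).le

theorem norm_coeff_mul_coeff_mul_pow_lt (hp : IsDominantIndex p r k) (hq : IsDominantIndex q r m)
    (hr : 0 ≤ r) {i j : ℕ} (hij : k < i ∨ m < j) :
    ‖p.coeff i * q.coeff j‖ * r ^ (i + j) < (‖p.coeff k‖ * r ^ k) * (‖q.coeff m‖ * r ^ m) := by
  rw [norm_coeff_mul_coeff_mul_pow]
  rcases hij with hi | hj
  · exact (mul_le_mul_of_nonneg_left (hq.le j) (by positivity)).trans_lt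
      (mul_lt_mul_of_pos_right (hp.lt i hi) (hq.pos hr))
  · exact mul_lt_mul' (hp.le i) (hq.lt j hj) (by positivity) (hp.pos hr)

section Ultrametric

variable [IsUltrametricDist L]

theorem norm_sum_coeff_mul_coeff_mul_pow_lt (hp : IsDominantIndex p r k)
    (hq : IsDominantIndex q r m) (hr : 0 ≤ r) {n : ℕ} {t : Finset (ℕ × ℕ)}
    (ht : ∀ x ∈ t, x.1 + x.2 = n ∧ (k < x.1 ∨ m < x.2)) :
    ‖∑ x ∈ t, p.coeff x.1 * q.coeff x.2‖ * r ^ n <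
      (‖p.coeff k‖ * r ^ k) * (‖q.coeff m‖ * r ^ m) := by
  rcases t.eq_empty_or_nonempty with rfl | hne
  · simpa using mul_pos (hp.pos hr) (hq.pos hr)
  obtain ⟨x, hx, hle⟩ := IsUltrametricDist.exists_norm_finsetSum_le_of_nonempty hne
    fun x => p.coeff x.1 * q.coeff x.2
  rw [← (ht x hx).1]
  exact (mul_le_mul_of_nonneg_right hle (by positivity)).trans_lt
    (hp.norm_coeff_mul_coeff_mul_pow_lt hq hr (ht x hx).2)

theorem mul (hp : IsDominantIndex p r k) (hq : IsDominantIndex q r m) (hr : 0 < r) :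
    IsDominantIndex (p * q) r (k + m) := by
  have hlead : ‖(p * q).coeff (k + m)‖ * r ^ (k + m) =
      (‖p.coeff k‖ * r ^ k) * (‖q.coeff m‖ * r ^ m) := by
    have hmem : (k, m) ∈ antidiagonal (k + m) := Finset.HasAntidiagonal.mem_antidiagonal.2 rfl
    have hrest := hp.norm_sum_coeff_mul_coeff_mul_pow_lt hq hr.le
      (t := (antidiagonal (k + m)).erase (k, m)) fun x hx => by
        obtain ⟨hne, hx⟩ := Finset.mem_erase.1 hx
        rw [Finset.HasAntidiagonal.mem_antidiagonal] at hx
        refine ⟨hx, ?_⟩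
        by_contra! hle
        exact hne (Prod.ext (by omega) (by omega))
    have hsmall : ‖∑ x ∈ (antidiagonal (k + m)).erase (k, m), p.coeff x.1 * q.coeff x.2‖ <
        ‖p.coeff k * q.coeff m‖ :=
      lt_of_mul_lt_mul_right (hrest.trans_eq (norm_coeff_mul_coeff_mul_pow p q r k m).symm)
        (pow_nonneg hr.le _)
    rw [coeff_mul, ← Finset.add_sum_erase _ _ hmem, ← norm_coeff_mul_coeff_mul_pow,
      IsUltrametricDist.norm_add_eq_max_of_norm_ne_norm hsmall.ne', max_eq_left hsmall.le]
  refine ⟨fun j => ?_, fun j hj => ?_⟩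
  · obtain ⟨x, hx, hle⟩ := IsUltrametricDist.exists_norm_finsetSum_le_of_nonempty
      ⟨(0, j), Finset.HasAntidiagonal.mem_antidiagonal.2 (zero_add j)⟩
      fun x : ℕ × ℕ => p.coeff x.1 * q.coeff x.2
    rw [hlead, coeff_mul]
    refine (mul_le_mul_of_nonneg_right hle (by positivity)).trans ?_
    rw [← Finset.HasAntidiagonal.mem_antidiagonal.1 hx]
    exact hp.norm_coeff_mul_coeff_mul_pow_le hq hr.le x.1 x.2
  · rw [hlead, coeff_mul]
    exact hp.norm_sum_coeff_mul_coeff_mul_pow_lt hq hr.le fun x hx => by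
      have hsum := Finset.HasAntidiagonal.mem_antidiagonal.1 hx
      exact ⟨hsum, by omega⟩

end Ultrametric

end IsDominantIndex

theorem isDominantIndex_C {c : L} (hc : c ≠ 0) : IsDominantIndex (C c) r 0 := by
  refine ⟨fun j => ?_, fun j hj => ?_⟩
  · rcases j with _ | j
    · rfl
    · simp [coeff_C]
  · simp [coeff_C, hj.ne', norm_pos_iff.2 hc]

theorem isDominantIndex_X_sub_C_of_norm_le {z : L} (hr : 0 < r) (hz : ‖z‖ ≤ r) :
    IsDominantIndex (X - C z) r 1 := by
  refine ⟨fun j => ?_, fun j hj => ?_⟩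
  · rcases j with _ | _ | j
    · simpa using hz
    · rfl
    · simp [coeff_X, hr.le]
  · rcases j with _ | _ | j
    · omega
    · omega
    · simp [coeff_X, hr]

theorem isDominantIndex_X_sub_C_of_lt_norm {z : L} (hr : 0 ≤ r) (hz : r < ‖z‖) :
    IsDominantIndex (X - C z) r 0 := by
  have hz0 : 0 < ‖z‖ := hr.trans_lt hz
  refine ⟨fun j => (?_ : _ ≤ _), fun j hj => ?_⟩
  · rcases j with _ | _ | j
    · rfl
    · simp [hz.le]
    · simp [coeff_X, coeff_C, hz0.le]
  · rcases j with _ | _ | j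
    · omega
    · simpa using hz
    · simpa [coeff_X, coeff_C] using hz0

variable [IsUltrametricDist L]

theorem isDominantIndex_prod_X_sub_C (hr : 0 < r) (s : Multiset L) :
    IsDominantIndex (s.map fun z => X - C z).prod r (s.filter fun z => ‖z‖ ≤ r).card := by
  induction s using Multiset.induction_on with
  | empty =>
    rw [Multiset.map_zero, Multiset.prod_zero, ← C_1]
    exact isDominantIndex_C one_ne_zero
  | cons z s ih =>
    rw [Multiset.map_cons, Multiset.prod_cons, Multiset.filter_cons]
    by_cases hz : ‖z‖ ≤ r
    · rw [if_pos hz, Multiset.card_add, Multiset.card_singleton]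
      exact (isDominantIndex_X_sub_C_of_norm_le hr hz).mul ih hr
    · rw [if_neg hz, Multiset.card_add, Multiset.card_zero, zero_add]
      simpa using (isDominantIndex_X_sub_C_of_lt_norm hr.le (not_le.1 hz)).mul ih hr

theorem isDominantIndex_taylor [IsAlgClosed L] (hr : 0 < r) (hp : p ≠ 0) (a : L) :
    IsDominantIndex (taylor a p) r (p.roots.filter fun z => ‖z - a‖ ≤ r).card := by
  have hfactor : taylor a p =
      C p.leadingCoeff * ((p.roots.map (· - a)).map fun z => X - C z).prod := by
    conv_lhs => rw [(IsAlgClosed.splits p).eq_prod_roots]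
    have hprod : taylor a (p.roots.map fun z => X - C z).prod =
        ((p.roots.map fun z => X - C z).map (taylor a)).prod :=
      map_multiset_prod (taylorAlgHom a) _
    rw [taylor_mul, taylor_C, hprod, Multiset.map_map, Multiset.map_map]
    congr 3
    funext z
    simp [taylor_X]
    ring
  have h := (isDominantIndex_C (r := r) (leadingCoeff_ne_zero.2 hp)).mul
    (isDominantIndex_prod_X_sub_C hr (p.roots.map (· - a))) hr
  rw [hfactor]
  simpa [Multiset.filter_map, Function.comp_def] using h

end Dominance

theorem Polynomial.derivative_taylor {R : Type*} [CommSemiring R] (p : R[X]) (a : R) :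
    derivative (taylor a p) = taylor a (derivative p) := by
  rw [taylor_apply, taylor_apply, derivative_comp]
  simp

theorem card_filter_roots_eq_card_filter_roots_derivative_add_one {L : Type*} [NormedField L]
    [IsUltrametricDist L] [IsAlgClosed L] (hnat : ∀ n : ℕ, n ≠ 0 → ‖(n : L)‖ = 1)
    {p : L[X]} {r : ℝ} {a : L} (hr : 0 < r) (hp : p ≠ 0) (ha : p.IsRoot a) :
    (p.roots.filter fun z => ‖z - a‖ ≤ r).card =
      ((derivative p).roots.filter fun z => ‖z - a‖ ≤ r).card + 1 := by
  have hdom := isDominantIndex_taylor hr hp a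
  obtain ⟨k, hk⟩ := Nat.exists_eq_add_one_of_ne_zero
    (hdom.ne_zero_of_coeff_zero_eq_zero hr.le (by rwa [taylor_coeff_zero]))
  rw [hk] at hdom ⊢
  have hdom' : IsDominantIndex (taylor a (derivative p)) r k := by
    rw [← derivative_taylor]
    exact hdom.derivative hnat hr
  have hp' : derivative p ≠ 0 := fun h => by simpa [h] using hdom'.pos hr.le
  rw [(isDominantIndex_taylor hr hp' a).unique hdom']

theorem Multiset.finsum_mem_count {α : Type*} [DecidableEq α] (M : Multiset α) {s : Set α}
    {P : α → Prop} [DecidablePred P] (hs : ∀ z, z ∈ s ↔ P z) :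
    ∑ᶠ z ∈ s, M.count z = (M.filter P).card := by
  rw [finsum_mem_eq_sum_of_inter_support_eq _ (t := (M.filter P).toFinset)]
  · rw [← Multiset.toFinset_sum_count_eq]
    refine Finset.sum_congr rfl fun z hz => ?_
    rw [Multiset.count_filter_of_pos (Multiset.mem_filter.1 (Multiset.mem_toFinset.1 hz)).2]
  · ext z
    simp [hs, and_comm]

section LocalDegree

variable {K : Type*} [CommRing K]

theorem localDeg_eq_rootMultiplicity {φ : K[X]} {z w : K} (hz : φ.eval z = w) :
    localDeg φ z = (φ - C w).rootMultiplicity z := by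
  rw [localDeg, hz]

theorem localDeg_sub_one [NoZeroDivisors K] [CharZero K] (φ : K[X]) (z : K) :
    localDeg φ z - 1 = (derivative φ).rootMultiplicity z := by
  rw [localDeg, ← derivative_rootMultiplicity_of_root (by simp), derivative_sub, derivative_C,
    sub_zero]

theorem finsum_mem_localDeg_fiber (φ : K[X]) (s : Set K) (w : K) :
    ∑ᶠ z ∈ {z ∈ s | φ.eval z = w}, localDeg φ z =
      ∑ᶠ z ∈ s, (φ - C w).rootMultiplicity z := by
  rw [finsum_mem_congr rfl fun z hz => localDeg_eq_rootMultiplicity hz.2]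
  refine finsum_mem_inter_support_eq' _ _ _ fun z hz => ?_
  have hroot := (rootMultiplicity_pos'.1 (Nat.pos_of_ne_zero hz)).2
  simp only [IsRoot, eval_sub, eval_C, sub_eq_zero] at hroot
  simp [hroot]

end LocalDegree

theorem degOn_sub_one_eq_sum_critical_multiplicities_general {L : Type*} [NormedField L] [IsUltrametricDist L] [IsAlgClosed L]
    (hres : ∀ q : ℚ, q ≠ 0 → ‖(q : L)‖ = 1)
    (φ : Polynomial L) (a : L) (r : ℝ) (hr : 0 < r)
    (d : ℕ)
    (hdeg : HasDegOn φ (Metric.closedBall a r)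
      ((fun z => φ.eval z) '' Metric.closedBall a r) d) :
    d - 1 = ∑ᶠ z ∈ Metric.closedBall a r, (localDeg φ z - 1) := by
  classical
  obtain ⟨hd1, hfiber⟩ := hdeg
  have hnat : ∀ n : ℕ, n ≠ 0 → ‖(n : L)‖ = 1 := fun n hn => by
    exact_mod_cast hres n (Nat.cast_ne_zero.2 hn)
  have : CharZero L := charZero_of_inj_zero fun n hn => by
    by_contra h
    simpa [hn] using hnat n h
  have hball : ∀ z, z ∈ closedBall a r ↔ ‖z - a‖ ≤ r := fun z => mem_closedBall_iff_norm
  set ψ := φ - C (φ.eval a) with hψdef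
  have hd : d = (ψ.roots.filter fun z => ‖z - a‖ ≤ r).card := by
    rw [← hfiber _ ⟨a, mem_closedBall_self hr.le, rfl⟩, finsum_mem_localDeg_fiber,
      ← hψdef, ← Multiset.finsum_mem_count _ hball]
    simp only [count_roots]
  have hψ : ψ ≠ 0 := by
    rintro h
    simp [h] at hd
    omega
  have hcrit : ∑ᶠ z ∈ closedBall a r, (localDeg φ z - 1) =
      ((derivative φ).roots.filter fun z => ‖z - a‖ ≤ r).card := by
    simp only [localDeg_sub_one, ← count_roots]
    exact Multiset.finsum_mem_count _ hball
  rw [hcrit, hd, card_filter_roots_eq_card_filter_roots_derivative_add_one hnat hr hψ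
    (by simp [ψ]), derivative_sub, derivative_C, sub_zero, Nat.add_sub_cancel]

/-- **Riemann–Hurwitz count on a ball.** If `φ` maps the closed ball `B` onto the
closed ball `φ(B)` with well-defined degree `d`, then `d - 1` is the sum of the
multiplicities of the critical points of `φ` in `B`. -/
theorem degOn_sub_one_eq_sum_critical_multiplicities {L : Type*} [NormedField L] [IsUltrametricDist L] [CompleteSpace L] [IsAlgClosed L]
    (hdense : ∀ r : ℝ, 0 < r → ∀ ε : ℝ, 0 < ε → ∃ x : L, x ≠ 0 ∧ |‖x‖ - r| < ε)
    (hres : ∀ q : ℚ, q ≠ 0 → ‖(q : L)‖ = 1)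
    (φ : Polynomial L) (a : L) (r : ℝ) (hr : 0 < r)
    (hB' : IsClosedBall ((fun z => φ.eval z) '' Metric.closedBall a r))
    (d : ℕ)
    (hdeg : HasDegOn φ (Metric.closedBall a r)
      ((fun z => φ.eval z) '' Metric.closedBall a r) d) :
    d - 1 = ∑ᶠ z ∈ Metric.closedBall a r, (localDeg φ z - 1) :=
  degOn_sub_one_eq_sum_critical_multiplicities_general hres φ a r hr d hdeg
end

section
/- Fixed point count in a ball: Let L be a complete algebraically closed non-archimedean field of residual characteristic zero, φ ∈ L[ζ], and B, B′ closed balls with φ(B) = B′ ⊇ B. If deg_B(φ) > 1 or B is strictly contained in B′, then the number of fixed points of φ in B, counted with multiplicity, equals deg_B(φ). -/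
open Polynomial Metric Set

/-!
Translate to the centre `a` and measure a polynomial on the disk `‖ζ‖ ≤ r` by its dominant degree,
the largest index `n` maximising `‖cₙ‖ rⁿ`. Over an algebraically closed ultrametric field this
index counts the roots in the disk: it is additive under products and is `1` or `0` for a linear
factor `ζ - ρ` according as `‖ρ‖ ≤ r` or not. It is also unchanged by a perturbation whose terms
stay below the maximum `s`, strictly so from index `n` on.

The degree hypothesis says that `φ - φ(a)` has dominant degree `d`, with some maximum `s`. The
ultrametric inequality and the root count then give `φ(B) = B(φ(a), s)`, hence `B' = B(φ(a), s)`
and `r ≤ s`. Passing from `φ - φ(a)` to `φ - ζ` perturbs the constant term by `φ(a) - a`, of size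
at most `s` because `a ∈ B'`, and the linear term by `1`, of size `r ≤ s`; when `d = 1` the strict
inclusion `B ⊊ B'` forces `r < s`. So `φ - ζ` still has dominant degree `d`: there are `d` fixed
points in `B`.
-/

section Ultrametric

variable {M : Type*} [SeminormedAddCommGroup M] [IsUltrametricDist M]

theorem norm_sum_mul_lt_of_forall_lt {ι : Type*} {u : Finset ι} {f : ι → M} {c C : ℝ}
    (hc : 0 ≤ c) (hC : 0 < C) (h : ∀ i ∈ u, ‖f i‖ * c < C) : ‖∑ i ∈ u, f i‖ * c < C := by
  rcases u.eq_empty_or_nonempty with rfl | hu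
  · simpa using hC
  · obtain ⟨i, hi, hle⟩ := IsUltrametricDist.exists_norm_finsetSum_le_of_nonempty hu f
    exact (mul_le_mul_of_nonneg_right hle hc).trans_lt (h i hi)

theorem radius_le_of_closedBall_subset_closedBall
    (hdense : ∀ r : ℝ, 0 < r → ∀ ε : ℝ, 0 < ε → ∃ x : M, x ≠ 0 ∧ |‖x‖ - r| < ε)
    {a b : M} {r s : ℝ} (hr : 0 ≤ r) (h : closedBall a r ⊆ closedBall b s) : r ≤ s := by
  by_contra! hsr
  have ha := h (mem_closedBall_self hr)
  have hs : 0 ≤ s := dist_nonneg.trans ha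
  obtain ⟨x, -, hx⟩ := hdense ((r + s) / 2) (by linarith) ((r - s) / 2) (by linarith)
  obtain ⟨hx₁, hx₂⟩ := abs_lt.mp hx
  have hax : a + x ∈ closedBall b s := h (by simp [dist_eq_norm]; linarith)
  have : ‖x‖ ≤ s := by
    simpa [dist_eq_norm] using (IsUltrametricDist.dist_triangle_max (a + x) b a).trans
      (max_le hax (by rwa [dist_comm]))
  linarith

end Ultrametric

namespace Polynomial

theorem rootMultiplicity_taylor {R : Type*} [CommRing R] (p : R[X]) (a x : R) :
    (taylor a p).rootMultiplicity x = p.rootMultiplicity (x + a) := by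
  rw [rootMultiplicity_eq_rootMultiplicity, ← taylor_apply, taylor_taylor, taylor_apply,
    ← rootMultiplicity_eq_rootMultiplicity]

theorem roots_taylor {R : Type*} [CommRing R] [IsDomain R] (p : R[X]) (a : R) :
    (taylor a p).roots = p.roots.map (· - a) := by
  classical
  ext x
  rw [count_roots, rootMultiplicity_taylor, ← count_roots,
    ← Multiset.count_map_eq_count' (· - a) _ (sub_left_injective) (x + a), add_sub_cancel_right]

open scoped Classical in
theorem finsum_mem_rootMultiplicity {R : Type*} [CommRing R] [IsDomain R] (p : R[X])
    (S : Set R) : ∑ᶠ z ∈ S, p.rootMultiplicity z = (p.roots.filter (· ∈ S)).card := by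
  rw [finsum_mem_eq_sum_of_subset (t := (p.roots.filter (· ∈ S)).toFinset) _ ?_ ?_,
    ← Multiset.toFinset_sum_count_eq]
  · refine Finset.sum_congr rfl fun z hz => ?_
    rw [Multiset.count_filter_of_pos (Multiset.mem_filter.mp (Multiset.mem_toFinset.mp hz)).2,
      count_roots]
  · rintro z ⟨hzS, hz⟩
    rw [Function.mem_support, ← count_roots] at hz
    simpa [hzS] using Multiset.count_ne_zero.mp hz
  · intro z hz
    exact (Multiset.mem_filter.mp (Multiset.mem_toFinset.mp hz)).2

theorem finsum_mem_closedBall_rootMultiplicity {K : Type*} [NormedField K] (p : K[X]) (a : K)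
    (r : ℝ) : ∑ᶠ z ∈ closedBall a r, p.rootMultiplicity z
      = ((taylor a p).roots.filter fun ρ => ‖ρ‖ ≤ r).card := by
  classical
  rw [finsum_mem_rootMultiplicity, roots_taylor, Multiset.filter_map, Multiset.card_map]
  exact congrArg _ (Multiset.filter_congr fun ρ _ => by simp [dist_eq_norm])

theorem finsum_mem_fiber_localDeg {R : Type*} [CommRing R] (φ : R[X]) (S : Set R) (w : R) :
    ∑ᶠ z ∈ {z ∈ S | φ.eval z = w}, localDeg φ z = ∑ᶠ z ∈ S, (φ - C w).rootMultiplicity z := by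
  refine (finsum_mem_congr rfl fun z hz => by rw [localDeg, hz.2]).trans
    (finsum_mem_inter_support_eq _ _ _ ?_)
  ext z
  simp only [mem_inter_iff, mem_sep_iff, Function.mem_support]
  refine ⟨fun h => ⟨h.1.1, h.2⟩, fun h => ⟨⟨h.1, ?_⟩, h.2⟩⟩
  by_contra hne
  exact h.2 (rootMultiplicity_eq_zero (by simpa [sub_eq_zero] using hne))

section NormedField

variable {K : Type*} [NormedField K] {p q e : K[X]} {r s t : ℝ} {n m : ℕ}

/-- `n` is the Weierstrass degree of `p` on the closed disk of radius `r`, and `s` its Gauss norm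
there. -/
structure IsDominantDegree (p : K[X]) (r s : ℝ) (n : ℕ) : Prop where
  le : ∀ i, ‖p.coeff i‖ * r ^ i ≤ s
  eq : ‖p.coeff n‖ * r ^ n = s
  lt : ∀ i, n < i → ‖p.coeff i‖ * r ^ i < s

namespace IsDominantDegree

theorem pos (h : IsDominantDegree p r s n) : 0 < s := by
  have := h.lt (n + p.natDegree + 1) (by omega)
  rwa [coeff_eq_zero_of_natDegree_lt (by omega), norm_zero, zero_mul] at this

theorem ne_zero (h : IsDominantDegree p r s n) : p ≠ 0 := by
  rintro rfl
  have := h.pos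
  rw [← h.eq, coeff_zero, norm_zero, zero_mul] at this
  exact this.false

theorem unique (h₁ : IsDominantDegree p r s n) (h₂ : IsDominantDegree p r t m) : n = m := by
  rcases lt_trichotomy n m with hnm | hnm | hnm
  · linarith [h₁.lt m hnm, h₁.eq, h₂.le n, h₂.eq]
  · exact hnm
  · linarith [h₂.lt n hnm, h₂.eq, h₁.le m, h₁.eq]

end IsDominantDegree

theorem isDominantDegree_C {c : K} (hc : c ≠ 0) : IsDominantDegree (C c) r ‖c‖ 0 where
  le i := by cases i <;> simp [coeff_C, norm_nonneg]
  eq := by simp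
  lt i hi := by simpa [coeff_C, hi.ne'] using hc

theorem isDominantDegree_X_sub_C_of_norm_le {ρ : K} (hr : 0 < r) (hρ : ‖ρ‖ ≤ r) :
    IsDominantDegree (X - C ρ) r r 1 where
  le
    | 0 => by simpa using hρ
    | 1 => by simp
    | i + 2 => by simp [coeff_X, hr.le]
  eq := by simp
  lt
    | i + 2, _ => by simp [coeff_X, hr]

theorem isDominantDegree_X_sub_C_of_lt_norm {ρ : K} (hr : 0 ≤ r) (hρ : r < ‖ρ‖) :
    IsDominantDegree (X - C ρ) r ‖ρ‖ 0 where
  le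
    | 0 => by simp
    | 1 => by simpa using hρ.le
    | i + 2 => by simp [coeff_X]
  eq := by simp
  lt
    | 1, _ => by simpa using hρ
    | i + 2, _ => by simp [coeff_X, hr.trans_lt hρ]

end NormedField

section Ultrametric

variable {K : Type*} [NormedField K] [IsUltrametricDist K] {p q e : K[X]} {r s t : ℝ} {n m : ℕ}

namespace IsDominantDegree

theorem norm_eval_le (h : IsDominantDegree p r s n) {x : K} (hx : ‖x‖ ≤ r) :
    ‖p.eval x‖ ≤ s := by
  rw [eval_eq_sum_range]
  refine IsUltrametricDist.norm_sum_le_of_forall_le_of_nonneg h.pos.le fun i _ => ?_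
  rw [norm_mul, norm_pow]
  exact (mul_le_mul_of_nonneg_left (pow_le_pow_left₀ (norm_nonneg x) hx i) (norm_nonneg _)).trans
    (h.le i)

theorem add (h : IsDominantDegree p r s n) (hr : 0 ≤ r) (he : ∀ i, ‖e.coeff i‖ * r ^ i ≤ s)
    (he' : ∀ i, n ≤ i → ‖e.coeff i‖ * r ^ i < s) : IsDominantDegree (p + e) r s n := by
  have hmax : ∀ i, ‖(p + e).coeff i‖ * r ^ i ≤ max (‖p.coeff i‖ * r ^ i) (‖e.coeff i‖ * r ^ i) :=
    fun i => by
      rw [coeff_add, ← max_mul_of_nonneg _ _ (by positivity)]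
      exact mul_le_mul_of_nonneg_right (IsUltrametricDist.norm_add_le_max _ _) (by positivity)
  have hlt : ‖e.coeff n‖ < ‖p.coeff n‖ :=
    lt_of_mul_lt_mul_right (h.eq ▸ he' n le_rfl) (by positivity)
  refine ⟨fun i => (hmax i).trans (max_le (h.le i) (he i)), ?_,
    fun i hi => (hmax i).trans_lt (max_lt (h.lt i hi) (he' i hi.le))⟩
  rw [coeff_add, IsUltrametricDist.norm_add_eq_max_of_norm_ne_norm hlt.ne', max_eq_left hlt.le,
    h.eq]

theorem add_C (h : IsDominantDegree p r s n) (hr : 0 ≤ r) (hn : 1 ≤ n) {c : K} (hc : ‖c‖ ≤ s) :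
    IsDominantDegree (p + C c) r s n := by
  refine h.add hr (fun i => ?_) (fun i hi => ?_) <;> rcases i with _ | i
  · simpa using hc
  · simp [h.pos.le]
  · omega
  · simp [h.pos]

theorem add_C_sub_X (h : IsDominantDegree p r s n) (hr : 0 ≤ r) (hn : 1 ≤ n) {c : K}
    (hc : ‖c‖ ≤ s) (hrs : r ≤ s) (hgap : r < s ∨ 2 ≤ n) :
    IsDominantDegree (p + (C c - X)) r s n := by
  refine h.add hr (fun i => ?_) (fun i hi => ?_) <;> rcases i with _ | _ | i
  · simpa using hc
  · simpa using hrs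
  · simp [coeff_X, h.pos.le]
  · omega
  · simpa using hgap.resolve_right (by omega)
  · simp [coeff_X, h.pos]

open Finset.HasAntidiagonal in
theorem mul (hp : IsDominantDegree p r s n) (hq : IsDominantDegree q r t m) (hr : 0 ≤ r) :
    IsDominantDegree (p * q) r (s * t) (n + m) := by
  have hterm : ∀ x : ℕ × ℕ, ‖p.coeff x.1 * q.coeff x.2‖ * r ^ (x.1 + x.2)
      = (‖p.coeff x.1‖ * r ^ x.1) * (‖q.coeff x.2‖ * r ^ x.2) := fun x => by
    rw [norm_mul, pow_add]; ring
  have hle : ∀ x : ℕ × ℕ, ‖p.coeff x.1 * q.coeff x.2‖ * r ^ (x.1 + x.2) ≤ s * t := fun x =>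
    (hterm x).trans_le (mul_le_mul (hp.le _) (hq.le _) (by positivity) hp.pos.le)
  have hlt : ∀ x : ℕ × ℕ, n < x.1 ∨ m < x.2 →
      ‖p.coeff x.1 * q.coeff x.2‖ * r ^ (x.1 + x.2) < s * t := by
    rintro x (hx | hx) <;> rw [hterm]
    · exact mul_lt_mul_of_nonneg_of_pos (hp.lt _ hx) (hq.le _) (by positivity) hq.pos
    · exact mul_lt_mul' (hp.le _) (hq.lt _ hx) (by positivity) hp.pos
  have hdom : ∀ k : ℕ, ∃ x ∈ antidiagonal k,
      ‖(p * q).coeff k‖ * r ^ k ≤ ‖p.coeff x.1 * q.coeff x.2‖ * r ^ (x.1 + x.2) := fun k => by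
    obtain ⟨x, hx, hle⟩ := IsUltrametricDist.exists_norm_finsetSum_le_of_nonempty
      (t := antidiagonal k) ⟨(0, k), by simp⟩ fun x => p.coeff x.1 * q.coeff x.2
    refine ⟨x, hx, ?_⟩
    rw [mem_antidiagonal.mp hx, coeff_mul]
    exact mul_le_mul_of_nonneg_right hle (by positivity)
  refine ⟨fun k => ?_, ?_, fun k hk => ?_⟩
  · obtain ⟨x, -, hx⟩ := hdom k
    exact hx.trans (hle x)
  · have hmem : (n, m) ∈ antidiagonal (n + m) := by simp
    have hrest : ‖∑ x ∈ (antidiagonal (n + m)).erase (n, m), p.coeff x.1 * q.coeff x.2‖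
        * r ^ (n + m) < ‖p.coeff n * q.coeff m‖ * r ^ (n + m) := by
      rw [hterm (n, m), hp.eq, hq.eq]
      refine norm_sum_mul_lt_of_forall_lt (by positivity) (mul_pos hp.pos hq.pos) fun x hx => ?_
      obtain ⟨hne, hx⟩ := Finset.mem_erase.mp hx
      rw [← mem_antidiagonal.mp hx]
      refine hlt x ?_
      have := mem_antidiagonal.mp hx
      by_contra! hx'
      exact hne (Prod.ext (by omega) (by omega))
    have hrest' := lt_of_mul_lt_mul_right hrest (by positivity)
    rw [coeff_mul, ← Finset.add_sum_erase _ _ hmem,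
      IsUltrametricDist.norm_add_eq_max_of_norm_ne_norm hrest'.ne', max_eq_left hrest'.le]
    simpa [hp.eq, hq.eq] using hterm (n, m)
  · obtain ⟨x, hx, hkx⟩ := hdom k
    have := mem_antidiagonal.mp hx
    exact hkx.trans_lt (hlt x (by omega))

end IsDominantDegree

theorem isDominantDegree_multiset_prod_X_sub_C (hr : 0 < r) (ρs : Multiset K) :
    ∃ s, IsDominantDegree (ρs.map fun ρ => X - C ρ).prod r s (ρs.filter fun ρ => ‖ρ‖ ≤ r).card := by
  induction ρs using Multiset.induction_on with
  | empty => exact ⟨1, by simpa using isDominantDegree_C (K := K) (r := r) one_ne_zero⟩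
  | cons ρ ρs ih =>
    obtain ⟨s, hs⟩ := ih
    rw [Multiset.map_cons, Multiset.prod_cons]
    by_cases hρ : ‖ρ‖ ≤ r
    · rw [Multiset.filter_cons_of_pos (p := fun ρ => ‖ρ‖ ≤ r) _ hρ, Multiset.card_cons, add_comm]
      exact ⟨_, (isDominantDegree_X_sub_C_of_norm_le hr hρ).mul hs hr.le⟩
    · rw [Multiset.filter_cons_of_neg (p := fun ρ => ‖ρ‖ ≤ r) _ hρ, ← zero_add (Multiset.card _)]
      exact ⟨_, (isDominantDegree_X_sub_C_of_lt_norm hr.le (not_le.mp hρ)).mul hs hr.le⟩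

end Ultrametric

section AlgClosed

variable {K : Type*} [NormedField K] [IsUltrametricDist K] [IsAlgClosed K] {p : K[X]} {r s : ℝ}
  {n : ℕ}

theorem exists_isDominantDegree_card_roots_norm_le (hp : p ≠ 0) (hr : 0 < r) :
    ∃ s, IsDominantDegree p r s (p.roots.filter fun ρ => ‖ρ‖ ≤ r).card := by
  obtain ⟨s, hs⟩ := isDominantDegree_multiset_prod_X_sub_C hr p.roots
  have := (isDominantDegree_C (r := r) (leadingCoeff_ne_zero.mpr hp)).mul hs hr.le
  rw [zero_add, ← (IsAlgClosed.splits p).eq_prod_roots] at this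
  exact ⟨_, this⟩

theorem IsDominantDegree.card_roots_norm_le (h : IsDominantDegree p r s n) (hr : 0 < r) :
    (p.roots.filter fun ρ => ‖ρ‖ ≤ r).card = n :=
  let ⟨_, h'⟩ := exists_isDominantDegree_card_roots_norm_le h.ne_zero hr
  h'.unique h

theorem IsDominantDegree.image_eval_closedBall {φ : K[X]} {a : K} (hr : 0 < r) (hn : 1 ≤ n)
    (h : IsDominantDegree (taylor a (φ - C (φ.eval a))) r s n) :
    (fun z => φ.eval z) '' closedBall a r = closedBall (φ.eval a) s := by
  refine Subset.antisymm ?_ fun w hw => ?_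
  · rintro _ ⟨z, hz, rfl⟩
    have := h.norm_eval_le (x := z - a) (by rwa [← dist_eq_norm])
    rwa [taylor_eval, sub_add_cancel, eval_sub, eval_C, ← dist_eq_norm] at this
  have hw : IsDominantDegree (taylor a (φ - C w)) r s n := by
    convert h.add_C hr.le hn (c := φ.eval a - w) (by rwa [← dist_eq_norm, dist_comm]) using 1
    simp only [map_sub, taylor_C]
    ring
  obtain ⟨ρ, hρ⟩ := Multiset.card_pos_iff_exists_mem.mp (hw.card_roots_norm_le hr ▸ hn)
  obtain ⟨hρroot, hρr⟩ := Multiset.mem_filter.mp hρ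
  have hroot := (mem_roots hw.ne_zero).mp hρroot
  refine ⟨ρ + a, by simpa [dist_eq_norm] using hρr, ?_⟩
  simpa [taylor_eval, sub_eq_zero] using hroot

end AlgClosed

end Polynomial

theorem fixed_point_count_general {L : Type*} [NormedField L] [IsUltrametricDist L] [IsAlgClosed L]
    (hdense : ∀ r : ℝ, 0 < r → ∀ ε : ℝ, 0 < ε → ∃ x : L, x ≠ 0 ∧ |‖x‖ - r| < ε)
    (φ : Polynomial L) (a a' : L) (r r' : ℝ) (hr : 0 < r)
    (himg : (fun z => φ.eval z) '' Metric.closedBall a r = Metric.closedBall a' r')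
    (hsub : Metric.closedBall a r ⊆ Metric.closedBall a' r')
    (d : ℕ) (hdeg : HasDegOn φ (Metric.closedBall a r) (Metric.closedBall a' r') d)
    (hcond : 1 < d ∨ Metric.closedBall a r ⊂ Metric.closedBall a' r') :
    (∑ᶠ z ∈ Metric.closedBall a r, Polynomial.rootMultiplicity z (φ - Polynomial.X)) = d := by
  obtain ⟨hd, hfiber⟩ := hdeg
  have hcount : ∀ w ∈ closedBall a' r',
      ((taylor a (φ - C w)).roots.filter fun ρ => ‖ρ‖ ≤ r).card = d := fun w hw => by
    rw [← hfiber w hw, finsum_mem_fiber_localDeg, finsum_mem_closedBall_rootMultiplicity]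
  set w₀ := φ.eval a
  have hw₀ : w₀ ∈ closedBall a' r' := himg ▸ mem_image_of_mem _ (mem_closedBall_self hr.le)
  have hp₀ : taylor a (φ - C w₀) ≠ 0 := fun h₀ => by
    have := hcount w₀ hw₀
    simp only [h₀, roots_zero, Multiset.filter_zero, Multiset.card_zero] at this
    omega
  obtain ⟨s, hs⟩ := exists_isDominantDegree_card_roots_norm_le hp₀ hr
  rw [hcount w₀ hw₀] at hs
  have hB' : closedBall a' r' = closedBall w₀ s := himg ▸ hs.image_eval_closedBall hr hd
  rw [hB'] at hsub hcond
  have ha : a ∈ closedBall w₀ s := hsub (mem_closedBall_self hr.le)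
  have hrs : r ≤ s := radius_le_of_closedBall_subset_closedBall hdense hr.le hsub
  have hgap : r < s ∨ 2 ≤ d := by
    refine hcond.symm.imp (fun hlt => hrs.lt_of_ne ?_) id
    rintro rfl
    exact hlt.ne (IsUltrametricDist.closedBall_eq_of_mem ha).symm
  have hfix : IsDominantDegree (taylor a (φ - X)) r s d := by
    convert hs.add_C_sub_X hr.le hd (c := w₀ - a) (by rwa [← dist_eq_norm, dist_comm]) hrs hgap
      using 1
    simp only [map_sub, taylor_C, taylor_X]
    ring
  rw [finsum_mem_closedBall_rootMultiplicity]
  exact hfix.card_roots_norm_le hr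

/-- **Fixed point count in a ball.** If `φ(B) = B' ⊇ B` with degree `d` on `B`, and
either `d > 1` or `B ⊊ B'`, then `φ` has exactly `d` fixed points in `B` counted with
multiplicity. -/
theorem fixed_point_count {L : Type*} [NormedField L] [IsUltrametricDist L] [CompleteSpace L] [IsAlgClosed L]
    (hdense : ∀ r : ℝ, 0 < r → ∀ ε : ℝ, 0 < ε → ∃ x : L, x ≠ 0 ∧ |‖x‖ - r| < ε)
    (hres : ∀ q : ℚ, q ≠ 0 → ‖(q : L)‖ = 1)
    (φ : Polynomial L) (a a' : L) (r r' : ℝ) (hr : 0 < r) (hr' : 0 < r')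
    (himg : (fun z => φ.eval z) '' Metric.closedBall a r = Metric.closedBall a' r')
    (hsub : Metric.closedBall a r ⊆ Metric.closedBall a' r')
    (d : ℕ) (hdeg : HasDegOn φ (Metric.closedBall a r) (Metric.closedBall a' r') d)
    (hcond : 1 < d ∨ Metric.closedBall a r ⊂ Metric.closedBall a' r') :
    (∑ᶠ z ∈ Metric.closedBall a r, Polynomial.rootMultiplicity z (φ - Polynomial.X)) = d :=
  fixed_point_count_general hdense φ a a' r r' hr himg hsub d hdeg hcond
end

section
/- Induced action on affine partitions: Let φ ∈ L[ζ], let B₀ be a closed ball and B₁ = φ(B₀), with P₀, P₁ the associated affine partitions (the partitions into residue classes after affine identification with the closed unit ball). Then B ↦ φ(B) is a well-defined map φ* : P₀ → P₁ which is polynomial with respect to the affine structures over the residual field, with deg(φ*) = deg_{B₀}(φ), and deg_B(φ*) = deg_B(φ) for every B ∈ P₀. -/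
open Polynomial Metric Set

/-- The ring of integers `{x : ‖x‖ ≤ 1}` of an ultrametric normed field. -/
def normRing (L : Type*) [NormedField L] [IsUltrametricDist L] : Subring L where
  carrier := {x | ‖x‖ ≤ 1}
  mul_mem' := by
    intro a b ha hb
    simp only [Set.mem_setOf_eq, norm_mul] at *
    calc ‖a‖ * ‖b‖ ≤ 1 * 1 := mul_le_mul ha hb (norm_nonneg b) zero_le_one
    _ = 1 := by ring
  one_mem' := by simp
  add_mem' := by
    intro a b ha hb
    exact le_trans (IsUltrametricDist.norm_add_le_max a b) (max_le ha hb)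
  zero_mem' := by simp
  neg_mem' := by intro a ha; simpa using ha

/-- The maximal ideal `{x : ‖x‖ < 1}` of the ring of integers. -/
def normIdeal (L : Type*) [NormedField L] [IsUltrametricDist L] : Ideal (normRing L) where
  carrier := {x | ‖(x : L)‖ < 1}
  add_mem' := by
    intro a b ha hb
    exact lt_of_le_of_lt (IsUltrametricDist.norm_add_le_max (a : L) b) (max_lt ha hb)
  zero_mem' := by simp
  smul_mem' := by
    intro c x hx
    simp only [Set.mem_setOf_eq, smul_eq_mul, Subring.coe_mul, norm_mul] at *
    calc ‖(c : L)‖ * ‖(x : L)‖ ≤ 1 * ‖(x : L)‖ :=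
      mul_le_mul_of_nonneg_right c.2 (norm_nonneg _)
    _ < 1 := by simpa using hx

/-- The residue field `O/M` of an ultrametric normed field. -/
def ResField (L : Type*) [NormedField L] [IsUltrametricDist L] :=
  (normRing L) ⧸ (normIdeal L)

noncomputable instance (L : Type*) [NormedField L] [IsUltrametricDist L] :
    CommRing (ResField L) := Ideal.Quotient.commRing (normIdeal L)

/-- Reduction map `L → O/M` (junk value `0` outside the ring of integers). -/
noncomputable def res {L : Type*} [NormedField L] [IsUltrametricDist L] (x : L) :
    ResField L :=
  if h : ‖x‖ ≤ 1 then Ideal.Quotient.mk (normIdeal L) ⟨x, h⟩ else 0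

/-!
After the affine changes of coordinates `z = a₀ + u₀ x` and `w = a₁ + u₁ y`, `φ` becomes a
polynomial `f` mapping the closed unit ball onto itself. As the residue field is infinite,
a polynomial mapping the unit ball into itself has integral coefficients: otherwise, divided by
its largest coefficient, it would have a nonzero reduction vanishing on the whole residue field.
So `f` has a reduction `ψ`, and `res ∘ f = ψ ∘ res`.

Over the algebraically closed `L`, `f - t` splits into linear factors. A root `z` with `‖z‖ ≤ 1`
contributes the factor `X - res z` to the reduction, while a root outside the unit ball
contributes `z⁻¹ X - 1`, which reduces to the unit `-1`. Hence the residue class `ball c 1`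
contains exactly `mult_{res c}(ψ - res t)` roots and the closed unit ball `deg ψ` of them; these
are the degrees of `f` on a class and on the whole ball. Positivity of the first count makes `f`
map `ball c 1` onto `ball (f c) 1`.
-/

section Residue

variable {L : Type*} [NormedField L] [IsUltrametricDist L]

theorem mem_normIdeal_iff {x : normRing L} : x ∈ normIdeal L ↔ ‖(x : L)‖ < 1 := Iff.rfl

instance : (normIdeal L).IsPrime where
  ne_top' h := by
    have h1 : (1 : normRing L) ∈ normIdeal L := h ▸ Submodule.mem_top
    simp [mem_normIdeal_iff] at h1
  mem_or_mem' {x y} hxy := by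
    simp only [mem_normIdeal_iff, Subring.coe_mul, norm_mul] at hxy ⊢
    by_contra! h
    nlinarith [h.1, h.2]

instance : IsDomain (ResField L) :=
  inferInstanceAs (IsDomain (normRing L ⧸ normIdeal L))

variable (L) in
noncomputable def resHom : normRing L →+* ResField L := Ideal.Quotient.mk (normIdeal L)

theorem resHom_surjective : Function.Surjective (resHom L) := Ideal.Quotient.mk_surjective

theorem resHom_eq_zero_iff {x : normRing L} : resHom L x = 0 ↔ ‖(x : L)‖ < 1 :=
  Ideal.Quotient.eq_zero_iff_mem

theorem resHom_eq_iff_mem_ball {x y : normRing L} :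
    resHom L x = resHom L y ↔ (x : L) ∈ ball (y : L) 1 := by
  rw [← sub_eq_zero, ← map_sub, resHom_eq_zero_iff, mem_ball, dist_eq_norm]
  rfl

theorem res_coe (x : normRing L) : res (x : L) = resHom L x := dif_pos x.2

theorem res_eq_res_iff {x y : L} (hx : ‖x‖ ≤ 1) (hy : ‖y‖ ≤ 1) :
    res x = res y ↔ x ∈ ball y 1 := by
  have h := resHom_eq_iff_mem_ball (x := ⟨x, hx⟩) (y := ⟨y, hy⟩)
  rwa [← res_coe, ← res_coe] at h

theorem eval_map_subtype (G : Polynomial (normRing L)) (x : normRing L) :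
    (G.map (normRing L).subtype).eval (x : L) = G.eval x := by
  rw [eval_map]
  exact eval₂_at_apply (normRing L).subtype x

theorem res_eval_map_subtype {F : Polynomial (normRing L)} {x : L} (hx : ‖x‖ ≤ 1) :
    res ((F.map (normRing L).subtype).eval x) = (F.map (resHom L)).eval (res x) := by
  lift x to normRing L using hx
  rw [eval_map_subtype, res_coe, res_coe, eval_map, eval₂_at_apply]

theorem norm_eval_map_subtype_le_one {F : Polynomial (normRing L)} {x : L} (hx : ‖x‖ ≤ 1) :
    ‖(F.map (normRing L).subtype).eval x‖ ≤ 1 := by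
  rw [eval_map_subtype F ⟨x, hx⟩]
  exact (F.eval _).2

theorem exists_map_subtype_eq (f : Polynomial L) (hf : ∀ i, ‖f.coeff i‖ ≤ 1) :
    ∃ F : Polynomial (normRing L), F.map (normRing L).subtype = f :=
  (mem_lifts f).mp ((lifts_iff_coeff_lifts f).mpr fun i => ⟨⟨_, hf i⟩, rfl⟩)

theorem map_subtype_ne_zero {G : Polynomial (normRing L)} (hG : G.map (resHom L) ≠ 0) :
    G.map (normRing L).subtype ≠ 0 :=
  (Polynomial.map_ne_zero_iff Subtype.val_injective).mpr fun h => hG (by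
    rw [h, Polynomial.map_zero])

theorem charZero_resField (hres : ∀ n : ℕ, n ≠ 0 → ‖(n : L)‖ = 1) : CharZero (ResField L) := by
  refine charZero_of_inj_zero fun n hn => ?_
  by_contra h0
  rw [← map_natCast (resHom L), resHom_eq_zero_iff, Subring.coe_natCast, hres n h0] at hn
  exact lt_irrefl _ hn

end Residue

theorem sub_C_ne_zero_of_one_le_natDegree {R : Type*} [Ring R] {p : Polynomial R}
    (hp : 1 ≤ p.natDegree) (a : R) : p - C a ≠ 0 := fun h => by
  rw [← natDegree_sub_C (a := a), h, natDegree_zero] at hp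
  exact absurd hp (by norm_num)

section LocalDegree

variable {R : Type*} [CommRing R]

theorem one_le_localDeg {ψ : Polynomial R} (hψ : 1 ≤ ψ.natDegree) (x : R) : 1 ≤ localDeg ψ x :=
  (rootMultiplicity_pos (sub_C_ne_zero_of_one_le_natDegree hψ _)).mpr (by simp)

theorem HasDegOn.unique {f : Polynomial R} {S T : Set R} {d d' : ℕ} (h : HasDegOn f S T d)
    (h' : HasDegOn f S T d') (hT : T.Nonempty) : d = d' := by
  obtain ⟨w, hw⟩ := hT
  rw [← h.2 w hw, h'.2 w hw]

variable [IsDomain R]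

theorem rootMultiplicity_C_mul {u : R} (hu : u ≠ 0) (p : Polynomial R) (x : R) :
    rootMultiplicity x (C u * p) = rootMultiplicity x p := by
  rcases eq_or_ne p 0 with rfl | hp
  · simp
  rw [rootMultiplicity_mul (mul_ne_zero (C_ne_zero.mpr hu) hp), rootMultiplicity_C, zero_add]

open Classical in
theorem finsum_localDeg_eq_card_filter_roots (f : Polynomial R) (t : R) (hf : f - C t ≠ 0)
    (S : Set R) :
    ∑ᶠ z ∈ {z ∈ S | f.eval z = t}, localDeg f z
      = Multiset.card ((f - C t).roots.filter (· ∈ S)) := by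
  have hset : {z ∈ S | f.eval z = t} = ↑((f - C t).roots.filter (· ∈ S)).toFinset := by
    ext z
    simp [mem_roots hf, sub_eq_zero, and_comm]
  rw [hset, finsum_mem_coe_finset, ← Multiset.toFinset_sum_count_eq]
  refine Finset.sum_congr rfl fun z hz => ?_
  obtain ⟨hroot, hzS⟩ := Multiset.mem_filter.mp (Multiset.mem_toFinset.mp hz)
  have hfz : f.eval z = t := by simpa [sub_eq_zero] using (mem_roots hf).mp hroot
  rw [Multiset.count_filter_of_pos hzS, count_roots, localDeg, hfz]

end LocalDegree

section AffineConj

variable {K : Type*} [Field K]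

/-- `φ` read in the affine coordinates `z = a₀ + u₀ x` on the source and `w = a₁ + u₁ y` on
the target. -/
noncomputable def affineConj (φ : Polynomial K) (a₀ u₀ a₁ u₁ : K) : Polynomial K :=
  C u₁⁻¹ * (φ.comp (C u₀ * X + C a₀) - C a₁)

variable {φ : Polynomial K} {a₀ u₀ a₁ u₁ : K}

theorem eval_affineConj (x : K) :
    (affineConj φ a₀ u₀ a₁ u₁).eval x = u₁⁻¹ * (φ.eval (a₀ + u₀ * x) - a₁) := by
  simp [affineConj, add_comm]

theorem affine_eval_affineConj (hu₁ : u₁ ≠ 0) (x : K) :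
    a₁ + u₁ * (affineConj φ a₀ u₀ a₁ u₁).eval x = φ.eval (a₀ + u₀ * x) := by
  rw [eval_affineConj]
  field_simp
  ring

theorem localDeg_affineConj (hu₀ : u₀ ≠ 0) (hu₁ : u₁ ≠ 0) (x : K) :
    localDeg (affineConj φ a₀ u₀ a₁ u₁) x = localDeg φ (a₀ + u₀ * x) := by
  have h : affineConj φ a₀ u₀ a₁ u₁ - C ((affineConj φ a₀ u₀ a₁ u₁).eval x)
      = C u₁⁻¹ * (φ - C (φ.eval (a₀ + u₀ * x))).comp (C u₀ * X + C a₀) := by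
    rw [eval_affineConj, affineConj, sub_comp, C_comp, C_mul, C_sub]
    ring
  rw [localDeg, h, rootMultiplicity_C_mul (inv_ne_zero hu₁),
    rootMultiplicity_comp_C_mul_X_add_C _ _ _ _ hu₀.isUnit, localDeg, add_comm]

theorem hasDegOn_affineConj_iff (hu₀ : u₀ ≠ 0) (hu₁ : u₁ ≠ 0) (S T : Set K) (d : ℕ) :
    HasDegOn (affineConj φ a₀ u₀ a₁ u₁) S T d ↔
      HasDegOn φ ((a₀ + u₀ * ·) '' S) ((a₁ + u₁ * ·) '' T) d := by
  have hinj : Function.Injective (a₀ + u₀ * ·) := fun x y h => by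
    simpa [hu₀] using h
  have hfiber : ∀ y, {z ∈ (a₀ + u₀ * ·) '' S | φ.eval z = a₁ + u₁ * y}
      = (a₀ + u₀ * ·) '' {x ∈ S | (affineConj φ a₀ u₀ a₁ u₁).eval x = y} := by
    intro y
    ext z
    simp only [mem_ofPred_eq, mem_image]
    constructor
    · rintro ⟨⟨x, hx, rfl⟩, hz⟩
      rw [← affine_eval_affineConj (a₁ := a₁) hu₁] at hz
      exact ⟨x, ⟨hx, by simpa [hu₁] using hz⟩, rfl⟩
    · rintro ⟨x, ⟨hx, rfl⟩, rfl⟩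
      exact ⟨⟨x, hx, rfl⟩, (affine_eval_affineConj hu₁ x).symm⟩
  simp only [HasDegOn, forall_mem_image, hfiber, finsum_mem_image hinj.injOn,
    localDeg_affineConj hu₀ hu₁]

theorem image_affineConj_eq_iff (hu₁ : u₁ ≠ 0) (S T : Set K) :
    (affineConj φ a₀ u₀ a₁ u₁).eval '' S = T ↔
      φ.eval '' ((a₀ + u₀ * ·) '' S) = (a₁ + u₁ * ·) '' T := by
  have hinj : Function.Injective (a₁ + u₁ * ·) := fun x y h => by
    simpa [hu₁] using h
  rw [← hinj.image_injective.eq_iff, image_image, image_image]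
  simp only [affine_eval_affineConj hu₁]

end AffineConj

section AffineBalls

open Pointwise

variable {L : Type*} [NormedField L] {u : L}

theorem image_affine_ball (a : L) (hu : u ≠ 0) (x : L) (r : ℝ) :
    (a + u * ·) '' ball x r = ball (a + u * x) (‖u‖ * r) := by
  rw [← image_image (a + ·) (u * ·), ← vadd_eq_add a, ← vadd_ball, ← smul_eq_mul u x,
    ← _root_.smul_ball hu]
  rfl

theorem image_affine_closedBall (a : L) (hu : u ≠ 0) (x : L) (r : ℝ) :
    (a + u * ·) '' closedBall x r = closedBall (a + u * x) (‖u‖ * r) := by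
  rw [← image_image (a + ·) (u * ·), ← vadd_eq_add a, ← vadd_closedBall, ← smul_eq_mul u x,
    ← smul_closedBall' hu]
  rfl

end AffineBalls

section RootCount

variable {L : Type*} [NormedField L] [IsUltrametricDist L]

theorem ball_one_subset_closedBall_zero {c : L} (hc : ‖c‖ ≤ 1) : ball c 1 ⊆ closedBall 0 1 := by
  have hc' : c ∈ closedBall (0 : L) 1 := by simpa using hc
  exact ball_subset_closedBall.trans (IsUltrametricDist.closedBall_eq_of_mem hc').symm.subset

open Classical in
def CountsRootsByReduction (G : Polynomial (normRing L)) : Prop :=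
  (∀ c : normRing L,
    Multiset.card ((G.map (normRing L).subtype).roots.filter (· ∈ ball (c : L) 1))
      = rootMultiplicity (resHom L c) (G.map (resHom L))) ∧
  Multiset.card ((G.map (normRing L).subtype).roots.filter (· ∈ closedBall (0 : L) 1))
    = (G.map (resHom L)).natDegree

theorem CountsRootsByReduction.mul {U H : Polynomial (normRing L)} (hU : CountsRootsByReduction U)
    (hH : CountsRootsByReduction H) (hUH : (U * H).map (resHom L) ≠ 0) :
    CountsRootsByReduction (U * H) := by
  have hUH' := map_subtype_ne_zero hUH
  rw [Polynomial.map_mul] at hUH hUH'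
  obtain ⟨hU0, hH0⟩ := mul_ne_zero_iff.mp hUH
  constructor
  · intro c
    rw [Polynomial.map_mul, Polynomial.map_mul, roots_mul hUH', Multiset.filter_add,
      Multiset.card_add, rootMultiplicity_mul hUH, hU.1 c, hH.1 c]
  · rw [Polynomial.map_mul, Polynomial.map_mul, roots_mul hUH', Multiset.filter_add,
      Multiset.card_add, natDegree_mul hU0 hH0, hU.2, hH.2]

theorem countsRootsByReduction_C (a : normRing L) : CountsRootsByReduction (C a) := by
  simp [CountsRootsByReduction]

theorem countsRootsByReduction_X_sub_C (z : normRing L) :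
    CountsRootsByReduction (X - C z) := by
  classical
  refine ⟨fun c => ?_, ?_⟩
  · rw [Polynomial.map_sub, map_X, map_C, roots_X_sub_C, Multiset.filter_singleton,
      Polynomial.map_sub, map_X, map_C, rootMultiplicity_X_sub_C]
    change Multiset.card (if (z : L) ∈ ball (c : L) 1 then _ else _) = _
    rw [← resHom_eq_iff_mem_ball, eq_comm (a := resHom L c)]
    split_ifs <;> rfl
  · have hz : ‖(z : L)‖ ≤ 1 := z.2
    simp [Multiset.filter_singleton, hz]

theorem countsRootsByReduction_C_mul_X_sub_one {v : normRing L} (hv : ‖(v : L)‖ < 1)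
    (hv0 : (v : L) ≠ 0) : CountsRootsByReduction (C v * X - 1) := by
  have hroots : (C (v : L) * X - 1).roots = {(v : L)⁻¹} := by
    rw [← C_1, roots_C_mul_X_sub_C _ hv0, mul_one]
  have hout : (v : L)⁻¹ ∉ closedBall (0 : L) 1 := by
    simp only [mem_closedBall, dist_zero_right, norm_inv, not_le]
    exact one_lt_inv_iff₀.mpr ⟨norm_pos_iff.mpr hv0, hv⟩
  have hred : (C v * X - 1 : Polynomial (normRing L)).map (resHom L) = C (-1) := by
    simp [resHom_eq_zero_iff.mpr hv]
  refine ⟨fun c => ?_, ?_⟩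
  · have hc : (v : L)⁻¹ ∉ ball (c : L) 1 := fun h => hout (ball_one_subset_closedBall_zero c.2 h)
    rw [hred, rootMultiplicity_C, Polynomial.map_sub, Polynomial.map_mul, map_C, map_X,
      Polynomial.map_one, Subring.coe_subtype, hroots, Multiset.filter_singleton, if_neg hc]
    rfl
  · rw [hred, natDegree_C, Polynomial.map_sub, Polynomial.map_mul, map_C, map_X,
      Polynomial.map_one, Subring.coe_subtype, hroots, Multiset.filter_singleton, if_neg hout]
    rfl

theorem norm_coeff_le_one_of_eq_C_mul_X_sub_one_mul {g h : Polynomial L} {w : L} (hw : ‖w‖ ≤ 1)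
    (hg : ∀ i, ‖g.coeff i‖ ≤ 1) (hgh : g = (C w * X - 1) * h) (i : ℕ) : ‖h.coeff i‖ ≤ 1 := by
  induction i with
  | zero =>
    have h0 : g.coeff 0 = -h.coeff 0 := by simp [hgh]
    simpa [h0] using hg 0
  | succ i ih =>
    have hsucc : h.coeff (i + 1) = w * h.coeff i + -g.coeff (i + 1) := by
      simp [hgh, sub_mul, mul_assoc, coeff_X_mul]
    rw [hsucc]
    refine (IsUltrametricDist.norm_add_le_max _ _).trans (max_le ?_ (by simpa using hg _))
    rw [norm_mul]
    exact mul_le_one₀ hw (norm_nonneg _) ih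

theorem exists_linear_factor_countsRootsByReduction (G : Polynomial (normRing L)) {z : L}
    (hz : (G.map (normRing L).subtype).IsRoot z) :
    ∃ U H, G = U * H ∧ U.natDegree = 1 ∧ CountsRootsByReduction U := by
  by_cases hz1 : ‖z‖ ≤ 1
  · lift z to normRing L using hz1
    refine ⟨X - C z, G /ₘ (X - C z), (mul_divByMonic_eq_iff_isRoot.mpr ?_).symm,
      natDegree_X_sub_C z, countsRootsByReduction_X_sub_C z⟩
    exact (isRoot_map_iff Subtype.val_injective).mp hz
  · rw [not_le] at hz1
    have hz0 : z ≠ 0 := norm_pos_iff.mp (one_pos.trans hz1)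
    have hv : ‖z⁻¹‖ < 1 := by rw [norm_inv]; exact inv_lt_one_of_one_lt₀ hz1
    obtain ⟨q, hq⟩ := dvd_iff_isRoot.mpr hz
    have hfac : G.map (normRing L).subtype = (C z⁻¹ * X - 1) * (C z * q) := by
      have hzz : C z⁻¹ * C z = (1 : Polynomial L) := by rw [← C_mul, inv_mul_cancel₀ hz0, C_1]
      rw [hq]
      linear_combination (-(X * q)) * hzz
    have hG : ∀ i, ‖(G.map (normRing L).subtype).coeff i‖ ≤ 1 := fun i => by
      rw [coeff_map]
      exact (G.coeff i).2
    obtain ⟨H, hH⟩ :=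
      exists_map_subtype_eq _ (norm_coeff_le_one_of_eq_C_mul_X_sub_one_mul hv.le hG hfac)
    let v : normRing L := ⟨z⁻¹, hv.le⟩
    refine ⟨C v * X - 1, H, map_injective (normRing L).subtype Subtype.val_injective ?_, ?_,
      countsRootsByReduction_C_mul_X_sub_one hv (inv_ne_zero hz0)⟩
    · rw [hfac, Polynomial.map_mul, hH]
      simp [v]
    · have hv0 : v ≠ 0 := fun h => inv_ne_zero hz0 (congrArg Subtype.val h)
      rw [← C_1, natDegree_sub_C, natDegree_C_mul_X _ hv0]

theorem countsRootsByReduction_of_map_ne_zero [IsAlgClosed L] {G : Polynomial (normRing L)}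
    (hG : G.map (resHom L) ≠ 0) : CountsRootsByReduction G := by
  induction hn : G.natDegree generalizing G with
  | zero =>
    rw [eq_C_of_natDegree_eq_zero hn]
    exact countsRootsByReduction_C _
  | succ n ih =>
    have hdeg : (G.map (normRing L).subtype).degree ≠ 0 := by
      rw [degree_map_eq_of_injective Subtype.val_injective, degree_eq_natDegree, hn]
      · exact_mod_cast n.succ_ne_zero
      · rintro rfl
        exact hG (Polynomial.map_zero _)
    obtain ⟨z, hz⟩ := IsAlgClosed.exists_root _ hdeg
    obtain ⟨U, H, rfl, hU1, hU⟩ := exists_linear_factor_countsRootsByReduction G hz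
    have hH : H.map (resHom L) ≠ 0 := right_ne_zero_of_mul (by rwa [← Polynomial.map_mul])
    have hU0 : U ≠ 0 := by rintro rfl; simp at hU1
    have hH0 : H ≠ 0 := by rintro rfl; exact hH (Polynomial.map_zero _)
    refine hU.mul (ih hH ?_) hG
    rw [natDegree_mul hU0 hH0, hU1] at hn
    omega

end RootCount

section IntegralCoefficients

variable {L : Type*} [NormedField L] [IsUltrametricDist L] [Infinite (ResField L)]

theorem exists_one_le_norm_eval_map_subtype {G : Polynomial (normRing L)}
    (hG : G.map (resHom L) ≠ 0) :
    ∃ x : normRing L, 1 ≤ ‖(G.map (normRing L).subtype).eval (x : L)‖ := by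
  obtain ⟨y, hy⟩ : ∃ y, (G.map (resHom L)).eval y ≠ 0 := by
    by_contra! h
    exact hG (zero_of_eval_zero _ h)
  obtain ⟨x, rfl⟩ := resHom_surjective y
  refine ⟨x, not_lt.mp fun h => hy ?_⟩
  rw [eval_map_subtype] at h
  rw [eval_map, eval₂_at_apply, resHom_eq_zero_iff]
  exact h

theorem norm_coeff_le_one_of_mapsTo {f : Polynomial L}
    (hf : MapsTo f.eval (closedBall 0 1) (closedBall 0 1)) (i : ℕ) : ‖f.coeff i‖ ≤ 1 := by
  by_contra! hi
  have hi0 : i ∈ f.support := mem_support_iff.mpr (by rintro h; simp [h] at hi; linarith)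
  obtain ⟨j, -, hj⟩ := f.support.exists_max_image (‖f.coeff ·‖) ⟨i, hi0⟩
  set u := f.coeff j
  have hmax : ∀ k, ‖f.coeff k‖ ≤ ‖u‖ := fun k => by
    by_cases hk : k ∈ f.support
    · exact hj k hk
    · simp [notMem_support_iff.mp hk]
  have hu : 1 < ‖u‖ := hi.trans_le (hmax i)
  have hu0 : 0 < ‖u‖ := one_pos.trans hu
  obtain ⟨G, hG⟩ := exists_map_subtype_eq (C u⁻¹ * f) fun k => by
    rw [coeff_C_mul, norm_mul, norm_inv, inv_mul_le_one₀ hu0]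
    exact hmax k
  have hGred : G.map (resHom L) ≠ 0 := by
    intro h
    have hj1 : ‖((G.coeff j : normRing L) : L)‖ < 1 :=
      resHom_eq_zero_iff.mp (by rw [← coeff_map, h, coeff_zero])
    rw [← Subring.coe_subtype, ← coeff_map, hG, coeff_C_mul,
      inv_mul_cancel₀ (norm_pos_iff.mp hu0), norm_one] at hj1
    exact lt_irrefl _ hj1
  obtain ⟨x, hx⟩ := exists_one_le_norm_eval_map_subtype hGred
  have hx1 : (x : L) ∈ closedBall 0 1 := mem_closedBall_zero_iff.mpr x.2
  have hfx : ‖f.eval (x : L)‖ ≤ 1 := by simpa using hf hx1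
  rw [hG, eval_mul, eval_C, norm_mul, norm_inv, inv_mul_eq_div, one_le_div hu0] at hx
  linarith

end IntegralCoefficients

section UnitBall

variable {L : Type*} [NormedField L] [IsUltrametricDist L] {F : Polynomial (normRing L)}

theorem one_le_natDegree_map_resHom
    (hF : (F.map (normRing L).subtype).eval '' closedBall 0 1 = closedBall 0 1) :
    1 ≤ (F.map (resHom L)).natDegree := by
  by_contra! h
  obtain ⟨a, hC⟩ : ∃ a, F.map (resHom L) = C a :=
    ⟨_, eq_C_of_natDegree_eq_zero (Nat.lt_one_iff.mp h)⟩
  have hres : ∀ y ∈ closedBall (0 : L) 1, res y = a := by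
    rintro y hy
    rw [← hF] at hy
    obtain ⟨x, hx, rfl⟩ := hy
    rw [res_eval_map_subtype (mem_closedBall_zero_iff.mp hx), hC, eval_C]
  have h01 := (hres 0 (by simp)).trans (hres 1 (by simp)).symm
  rw [res_eq_res_iff (by simp) (by simp)] at h01
  simp at h01

variable [IsAlgClosed L]

theorem hasDegOn_map_subtype_ball (hψ : 1 ≤ (F.map (resHom L)).natDegree) {c : L} (hc : ‖c‖ ≤ 1) :
    HasDegOn (F.map (normRing L).subtype) (ball c 1)
      (ball ((F.map (normRing L).subtype).eval c) 1) (localDeg (F.map (resHom L)) (res c)) := by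
  refine ⟨one_le_localDeg hψ _, fun t ht => ?_⟩
  have ht1 : ‖t‖ ≤ 1 := mem_closedBall_zero_iff.mp
    (ball_one_subset_closedBall_zero (norm_eval_map_subtype_le_one hc) ht)
  have hred : res t = (F.map (resHom L)).eval (res c) := by
    rw [← res_eval_map_subtype hc, res_eq_res_iff ht1 (norm_eval_map_subtype_le_one hc)]
    exact ht
  lift t to normRing L using ht1
  lift c to normRing L using hc
  rw [res_coe, res_coe] at hred
  have hG : (F - C t).map (resHom L) ≠ 0 := by
    rw [Polynomial.map_sub, map_C]
    exact sub_C_ne_zero_of_one_le_natDegree hψ _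
  have hcount := (countsRootsByReduction_of_map_ne_zero hG).1 c
  rw [Polynomial.map_sub, map_C, Subring.coe_subtype] at hcount
  rw [finsum_localDeg_eq_card_filter_roots _ _ (by simpa using map_subtype_ne_zero hG), hcount,
    localDeg, Polynomial.map_sub, map_C, hred, res_coe]

theorem hasDegOn_map_subtype_closedBall (hψ : 1 ≤ (F.map (resHom L)).natDegree) :
    HasDegOn (F.map (normRing L).subtype) (closedBall 0 1) (closedBall 0 1)
      (F.map (resHom L)).natDegree := by
  refine ⟨hψ, fun t ht => ?_⟩
  lift t to normRing L using mem_closedBall_zero_iff.mp ht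
  have hG : (F - C t).map (resHom L) ≠ 0 := by
    rw [Polynomial.map_sub, map_C]
    exact sub_C_ne_zero_of_one_le_natDegree hψ _
  have hcount := (countsRootsByReduction_of_map_ne_zero hG).2
  rw [Polynomial.map_sub, map_C, Subring.coe_subtype] at hcount
  rw [finsum_localDeg_eq_card_filter_roots _ _ (by simpa using map_subtype_ne_zero hG), hcount,
    Polynomial.map_sub, map_C, natDegree_sub_C]

theorem image_eval_map_subtype_ball (hψ : 1 ≤ (F.map (resHom L)).natDegree) {c : L} (hc : ‖c‖ ≤ 1) :
    (F.map (normRing L).subtype).eval '' ball c 1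
      = ball ((F.map (normRing L).subtype).eval c) 1 := by
  refine Subset.antisymm ?_ fun t ht => ?_
  · rintro _ ⟨z, hz, rfl⟩
    have hz1 : ‖z‖ ≤ 1 := mem_closedBall_zero_iff.mp (ball_one_subset_closedBall_zero hc hz)
    rw [← res_eq_res_iff (norm_eval_map_subtype_le_one hz1) (norm_eval_map_subtype_le_one hc),
      res_eval_map_subtype hz1, res_eval_map_subtype hc, (res_eq_res_iff hz1 hc).mpr hz]
  · by_contra h
    have hempty : {z ∈ ball c 1 | (F.map (normRing L).subtype).eval z = t} = ∅ :=
      eq_empty_of_forall_notMem fun z hz => h ⟨z, hz⟩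
    have hdeg := (hasDegOn_map_subtype_ball hψ hc).2 t ht
    rw [hempty, finsum_mem_empty] at hdeg
    exact absurd (one_le_localDeg hψ (res c)) (by omega)

theorem exists_reduction_of_image_closedBall [Infinite (ResField L)] {f : Polynomial L}
    (hf : f.eval '' closedBall 0 1 = closedBall 0 1) :
    ∃ ψ : Polynomial (ResField L), HasDegOn f (closedBall 0 1) (closedBall 0 1) ψ.natDegree ∧
      ∀ x, ‖x‖ ≤ 1 → res (f.eval x) = ψ.eval (res x) ∧ f.eval '' ball x 1 = ball (f.eval x) 1 ∧
        HasDegOn f (ball x 1) (ball (f.eval x) 1) (localDeg ψ (res x)) := by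
  obtain ⟨F, rfl⟩ := exists_map_subtype_eq f
    (norm_coeff_le_one_of_mapsTo (mapsTo_iff_image_subset.mpr hf.subset))
  have hψ := one_le_natDegree_map_resHom hf
  exact ⟨F.map (resHom L), hasDegOn_map_subtype_closedBall hψ, fun x hx =>
    ⟨res_eval_map_subtype hx, image_eval_map_subtype_ball hψ hx, hasDegOn_map_subtype_ball hψ hx⟩⟩

end UnitBall

theorem affinePartition_action_general {L : Type*} [NormedField L] [IsUltrametricDist L] [IsAlgClosed L]
    (hres : ∀ q : ℚ, q ≠ 0 → ‖(q : L)‖ = 1)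
    (φ : Polynomial L) (a₀ a₁ : L) (r₀ r₁ : ℝ) (hr₀ : 0 < r₀) (hr₁ : 0 < r₁)
    (u₀ u₁ : L) (h₀ : ‖u₀‖ = r₀) (h₁ : ‖u₁‖ = r₁)
    (himg : (fun z => φ.eval z) '' Metric.closedBall a₀ r₀ = Metric.closedBall a₁ r₁)
    (d : ℕ) (hdeg : HasDegOn φ (Metric.closedBall a₀ r₀) (Metric.closedBall a₁ r₁) d) :
    (∀ c ∈ Metric.closedBall a₀ r₀,
      (fun z => φ.eval z) '' Metric.ball c r₀ = Metric.ball (φ.eval c) r₁) ∧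
    ∃ ψ : Polynomial (ResField L),
      ψ.natDegree = d ∧
      (∀ c ∈ Metric.closedBall a₀ r₀,
        res ((φ.eval c - a₁) / u₁) = ψ.eval (res ((c - a₀) / u₀))) ∧
      (∀ c ∈ Metric.closedBall a₀ r₀,
        HasDegOn φ (Metric.ball c r₀) (Metric.ball (φ.eval c) r₁)
          (localDeg ψ (res ((c - a₀) / u₀)))) := by
  have hu₀ : u₀ ≠ 0 := norm_pos_iff.mp (h₀ ▸ hr₀)
  have hu₁ : u₁ ≠ 0 := norm_pos_iff.mp (h₁ ▸ hr₁)
  have : Infinite (ResField L) := Infinite.of_injective _ (charZero_resField fun n hn => by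
    exact_mod_cast hres n (by exact_mod_cast hn)).cast_injective
  have hball₀ : ∀ x, (a₀ + u₀ * ·) '' ball x 1 = ball (a₀ + u₀ * x) r₀ := fun x => by
    rw [image_affine_ball a₀ hu₀, h₀, mul_one]
  have hball₁ : ∀ y, (a₁ + u₁ * ·) '' ball y 1 = ball (a₁ + u₁ * y) r₁ := fun y => by
    rw [image_affine_ball a₁ hu₁, h₁, mul_one]
  have hB₀ : (a₀ + u₀ * ·) '' closedBall 0 1 = closedBall a₀ r₀ := by
    rw [image_affine_closedBall a₀ hu₀, h₀, mul_zero, add_zero, mul_one]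
  have hB₁ : (a₁ + u₁ * ·) '' closedBall 0 1 = closedBall a₁ r₁ := by
    rw [image_affine_closedBall a₁ hu₁, h₁, mul_zero, add_zero, mul_one]
  obtain ⟨ψ, hψdeg, hψ⟩ := exists_reduction_of_image_closedBall (f := affineConj φ a₀ u₀ a₁ u₁)
    (by rw [image_affineConj_eq_iff hu₁, hB₀, hB₁, himg])
  rw [← hB₀]
  simp only [forall_mem_image, mem_closedBall_zero_iff, add_sub_cancel_left,
    mul_div_cancel_left₀ _ hu₀, ← affine_eval_affineConj (a₁ := a₁) hu₁,
    mul_div_cancel_left₀ _ hu₁]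
  refine ⟨fun x hx => ?_, ψ, ?_, fun x hx => (hψ x hx).1, fun x hx => ?_⟩
  · rw [← hball₀, ← hball₁, ← image_affineConj_eq_iff hu₁]
    exact (hψ x hx).2.1
  · rw [← hB₀, ← hB₁, ← hasDegOn_affineConj_iff hu₀ hu₁] at hdeg
    exact hψdeg.unique hdeg ⟨0, by simp⟩
  · rw [← hball₀, ← hball₁, ← hasDegOn_affineConj_iff hu₀ hu₁]
    exact (hψ x hx).2.2

/-- **Induced action on affine partitions.** If `φ` maps the closed ball `B₀` of radius
`r₀ = ‖u₀‖` onto the closed ball `B₁` of radius `r₁ = ‖u₁‖` with degree `d`, then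
`φ` maps each class of the affine partition of `B₀` (the open balls of radius `r₀`)
onto a class of the affine partition of `B₁`, and in the affine coordinates
`x ↦ (x - aᵢ)/uᵢ` followed by reduction, this induced action is given by a polynomial
`ψ` over the residue field, with `deg ψ = d` and with local degrees of `ψ` matching
the degrees of `φ` on the corresponding classes. -/
theorem affinePartition_action {L : Type*} [NormedField L] [IsUltrametricDist L] [CompleteSpace L] [IsAlgClosed L]
    (hdense : ∀ r : ℝ, 0 < r → ∀ ε : ℝ, 0 < ε → ∃ x : L, x ≠ 0 ∧ |‖x‖ - r| < ε)
    (hres : ∀ q : ℚ, q ≠ 0 → ‖(q : L)‖ = 1)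
    (φ : Polynomial L) (a₀ a₁ : L) (r₀ r₁ : ℝ) (hr₀ : 0 < r₀) (hr₁ : 0 < r₁)
    (u₀ u₁ : L) (h₀ : ‖u₀‖ = r₀) (h₁ : ‖u₁‖ = r₁)
    (himg : (fun z => φ.eval z) '' Metric.closedBall a₀ r₀ = Metric.closedBall a₁ r₁)
    (d : ℕ) (hdeg : HasDegOn φ (Metric.closedBall a₀ r₀) (Metric.closedBall a₁ r₁) d) :
    (∀ c ∈ Metric.closedBall a₀ r₀,
      (fun z => φ.eval z) '' Metric.ball c r₀ = Metric.ball (φ.eval c) r₁) ∧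
    ∃ ψ : Polynomial (ResField L),
      ψ.natDegree = d ∧
      (∀ c ∈ Metric.closedBall a₀ r₀,
        res ((φ.eval c - a₁) / u₁) = ψ.eval (res ((c - a₀) / u₀))) ∧
      (∀ c ∈ Metric.closedBall a₀ r₀,
        HasDegOn φ (Metric.ball c r₀) (Metric.ball (φ.eval c) r₁)
          (localDeg ψ (res ((c - a₀) / u₀)))) :=
  affinePartition_action_general hres φ a₀ a₁ r₀ r₁ hr₀ hr₁ u₀ u₁ h₀ h₁ himg d hdeg
end

section
/- If every infraconnected component of the filled Julia set K(φ) of a polynomial φ ∈ L[ζ] is a singleton, then every periodic cycle of φ is repelling, i.e. for every periodic point ζ₀ of period p one has |(φ^p)′(ζ₀)| > 1. -/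
open Polynomial Metric Set

/-!
Suppose `ψ = φ^p` fixes `ζ₀` with `|ψ'(ζ₀)| ≤ 1`. Expanding `ψ` around `ζ₀`, the linear term
has norm at most `1` and, on a ball of small radius `s`, the higher terms are at most `s` in
norm, so the ultrametric inequality makes `ψ` map the closed ball `B(ζ₀, s)` into itself.
Hence every orbit starting in that ball is bounded and the ball lies in `K(φ)`. Since the value
group is dense, a closed ball of positive radius is infraconnected and contains more than one
point, contradicting the triviality of the components.
-/

open Bornology

lemma exists_norm_mem_Ioo {L : Type*} [NormedField L]
    (hdense : ∀ r : ℝ, 0 < r → ∀ ε : ℝ, 0 < ε → ∃ x : L, x ≠ 0 ∧ |‖x‖ - r| < ε)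
    {a b : ℝ} (ha : 0 ≤ a) (hab : a < b) : ∃ x : L, a < ‖x‖ ∧ ‖x‖ < b := by
  obtain ⟨x, -, hx⟩ := hdense ((a + b) / 2) (by linarith) ((b - a) / 2) (by linarith)
  rw [abs_lt] at hx
  exact ⟨x, by linarith, by linarith⟩

section Ultrametric

variable {L : Type*} [NormedField L] [IsUltrametricDist L]

/-- If `x₀, x₁` witness that neither ball contains `B(a, s)`, then both radii are below
`dist x₀ x₁`, and `x₀ + t` with `max r₀ r₁ < ‖t‖ < dist x₀ x₁` lies in `B(a, s)` but in neither
ball. -/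
theorem infraconnected_closedBall
    (hdense : ∀ r : ℝ, 0 < r → ∀ ε : ℝ, 0 < ε → ∃ x : L, x ≠ 0 ∧ |‖x‖ - r| < ε)
    (a : L) (s : ℝ) : Infraconnected (closedBall a s) := by
  intro a₀ r₀ a₁ r₁ _ hcov
  by_contra! h
  obtain ⟨⟨x₀, hx₀, hx₀₀⟩, ⟨x₁, hx₁, hx₁₁⟩⟩ := And.imp not_subset.1 not_subset.1 h
  have hx₀₁ : x₀ ∈ closedBall a₁ r₁ := (hcov hx₀).resolve_left hx₀₀
  have hx₁₀ : x₁ ∈ closedBall a₀ r₀ := (hcov hx₁).resolve_right hx₁₁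
  have hr₀ : r₀ < dist x₀ x₁ := by
    by_contra! hle
    exact hx₀₀ (IsUltrametricDist.closedBall_eq_of_mem hx₁₀ ▸ mem_closedBall.2 hle)
  have hr₁ : r₁ < dist x₀ x₁ := by
    by_contra! hle
    exact hx₁₁ (IsUltrametricDist.closedBall_eq_of_mem hx₀₁ ▸
      mem_closedBall.2 ((dist_comm _ _).trans_le hle))
  obtain ⟨t, hrt, htx⟩ := exists_norm_mem_Ioo hdense
    (le_max_of_le_left (dist_nonneg.trans hx₁₀)) (max_lt hr₀ hr₁)
  have hw : dist (x₀ + t) x₀ = ‖t‖ := by simp [dist_eq_norm]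
  have hx₀x₁ : dist x₀ x₁ ≤ s :=
    mem_closedBall.1 (IsUltrametricDist.closedBall_eq_of_mem hx₁ ▸ hx₀)
  have hwB : x₀ + t ∈ closedBall a s :=
    (dist_triangle_max _ x₀ _).trans (max_le (by linarith) hx₀)
  have hw₁ : x₀ + t ∉ closedBall a₁ r₁ := fun hw₁ => by
    have := mem_closedBall.1 (IsUltrametricDist.closedBall_eq_of_mem hx₀₁ ▸ hw₁)
    exact (hw ▸ this).not_gt ((le_max_right r₀ r₁).trans_lt hrt)
  have hw₀ : x₀ + t ∉ closedBall a₀ r₀ := fun hw₀ => by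
    have hwx₁ := mem_closedBall.1 (IsUltrametricDist.closedBall_eq_of_mem hx₁₀ ▸ hw₀)
    have := dist_triangle_max x₀ (x₀ + t) x₁
    rw [dist_comm x₀ (x₀ + t), hw] at this
    exact this.not_gt (max_lt htx (hwx₁.trans_lt hr₀))
  exact (hcov hwB).elim hw₀ hw₁

/-- With `s = M⁻¹` for a bound `M ≥ 1` on the coefficients, the terms of degree `≥ 2` are at most
`M s² = s` on `B(0, s)`. -/
lemma Polynomial.exists_forall_norm_eval_le_of_coeff_zero (g : L[X]) (h₀ : g.coeff 0 = 0)
    (h₁ : ‖g.coeff 1‖ ≤ 1) : ∃ s > 0, ∀ t : L, ‖t‖ ≤ s → ‖g.eval t‖ ≤ s := by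
  obtain ⟨M, hM⟩ := (g.finite_range_coeff.image norm).bddAbove
  have hcoeff (i : ℕ) : ‖g.coeff i‖ ≤ max 1 M :=
    (hM ⟨_, ⟨i, rfl⟩, rfl⟩).trans (le_max_right _ _)
  have hM₁ : 1 ≤ max 1 M := le_max_left _ _
  set s := (max 1 M)⁻¹
  have hs : 0 < s := by positivity
  have hs₁ : s ≤ 1 := inv_le_one_of_one_le₀ hM₁
  refine ⟨s, hs, fun t ht => ?_⟩
  rw [eval_eq_sum_range]
  refine IsUltrametricDist.norm_sum_le_of_forall_le_of_nonneg hs.le fun i _ => ?_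
  rw [norm_mul, norm_pow]
  match i with
  | 0 => simp [h₀, hs.le]
  | 1 => simpa using mul_le_mul h₁ ht (norm_nonneg t) zero_le_one
  | n + 2 =>
    calc ‖g.coeff (n + 2)‖ * ‖t‖ ^ (n + 2) ≤ max 1 M * s ^ 2 :=
          mul_le_mul (hcoeff _)
            ((pow_le_pow_left₀ (norm_nonneg t) ht _).trans
              (pow_le_pow_of_le_one hs.le hs₁ (by omega)))
            (by positivity) (by positivity)
      _ = s := by rw [sq, ← mul_assoc, mul_inv_cancel₀ (by positivity), one_mul]

lemma Polynomial.exists_mapsTo_closedBall_of_norm_derivative_le_one (ψ : L[X]) {ζ : L}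
    (hfix : ψ.eval ζ = ζ) (hψ' : ‖ψ.derivative.eval ζ‖ ≤ 1) :
    ∃ s > 0, MapsTo (fun z => ψ.eval z) (closedBall ζ s) (closedBall ζ s) := by
  obtain ⟨s, hs, hg⟩ := (taylor ζ ψ - C ζ).exists_forall_norm_eval_le_of_coeff_zero
    (by simp [taylor_coeff_zero, hfix]) (by simpa [taylor_coeff_one, coeff_C] using hψ')
  refine ⟨s, hs, fun z hz => ?_⟩
  simpa [dist_eq_norm, taylor_eval] using hg (z - ζ) (by simpa [dist_eq_norm] using hz)

end Ultrametric

lemma Polynomial.isBounded_image_eval {L : Type*} [NormedField L] (f : L[X]) {S : Set L}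
    (hS : IsBounded S) : IsBounded ((fun z => f.eval z) '' S) := by
  obtain ⟨R, hR⟩ := isBounded_iff_forall_norm_le.1 hS
  refine isBounded_iff_forall_norm_le.2
    ⟨(∑ i ∈ Finset.range (f.natDegree + 1), ‖f.coeff i‖) * max 1 R ^ f.natDegree, ?_⟩
  rintro _ ⟨z, hz, rfl⟩
  dsimp only
  rw [eval_eq_sum_range, Finset.sum_mul]
  refine (norm_sum_le _ _).trans (Finset.sum_le_sum fun i hi => ?_)
  rw [norm_mul, norm_pow]
  gcongr
  calc ‖z‖ ^ i ≤ max 1 R ^ i := by gcongr; exact (hR z hz).trans (le_max_right _ _)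
    _ ≤ max 1 R ^ f.natDegree :=
      pow_le_pow_right₀ (le_max_left _ _) (Nat.lt_succ_iff.1 (Finset.mem_range.1 hi))

lemma mem_filledJulia_of_mapsTo_iterate {L : Type*} [NormedField L] {φ : L[X]} {S : Set L}
    {p : ℕ} (hp : 0 < p) (hS : IsBounded S) (hmaps : MapsTo (fun w => φ.eval w)^[p] S S)
    {z : L} (hz : z ∈ S) : z ∈ filledJulia φ := by
  set f := fun w => φ.eval w
  have hbdd (r : ℕ) : IsBounded (f^[r] '' S) := by
    induction r with
    | zero => simpa using hS
    | succ r ih => rw [Function.iterate_succ', image_comp]; exact φ.isBounded_image_eval ih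
  have horbit (n : ℕ) : f^[n] z ∈ ⋃ r ∈ Finset.range p, f^[r] '' S := by
    rw [← Nat.mod_add_div n p, Function.iterate_add_apply, Function.iterate_mul]
    exact mem_biUnion (Finset.mem_range.2 (Nat.mod_lt n hp))
      (mem_image_of_mem _ ((hmaps.iterate _) hz))
  obtain ⟨C, hC⟩ :=
    isBounded_iff_forall_norm_le.1 ((isBounded_biUnion_finset _).2 fun r _ => hbdd r)
  intro htend
  obtain ⟨n, hn⟩ := (htend.eventually_gt_atTop C).exists
  exact hn.not_ge (hC _ (horbit n))

lemma polyIter_eval {L : Type*} [CommRing L] (φ : L[X]) (p : ℕ) (z : L) :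
    (polyIter φ p).eval z = (fun w => φ.eval w)^[p] z := by
  induction p with
  | zero => simp [polyIter]
  | succ n ih => rw [polyIter, eval_comp, ih, Function.iterate_succ_apply']

theorem singleton_infraComponents_repelling_general {L : Type*} [NormedField L] [IsUltrametricDist L]
    (hdense : ∀ r : ℝ, 0 < r → ∀ ε : ℝ, 0 < ε → ∃ x : L, x ≠ 0 ∧ |‖x‖ - r| < ε)
    (φ : Polynomial L)
    (hsing : ∀ z ∈ filledJulia φ, ∀ w ∈ filledJulia φ,
      ∀ S ⊆ filledJulia φ, Infraconnected S → z ∈ S → w ∈ S → z = w) :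
    ∀ (ζ₀ : L) (p : ℕ), 0 < p → (fun w => φ.eval w)^[p] ζ₀ = ζ₀ →
      1 < ‖(Polynomial.derivative (polyIter φ p)).eval ζ₀‖ := by
  intro ζ₀ p hp hfix
  by_contra! hle
  obtain ⟨s, hs, hmaps⟩ := (polyIter φ p).exists_mapsTo_closedBall_of_norm_derivative_le_one
    (by rwa [polyIter_eval]) hle
  simp only [polyIter_eval] at hmaps
  have hK : closedBall ζ₀ s ⊆ filledJulia φ := fun z hz =>
    mem_filledJulia_of_mapsTo_iterate hp isBounded_closedBall hmaps hz
  obtain ⟨x, hx, hxs⟩ := exists_norm_mem_Ioo hdense le_rfl hs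
  have hζ₀ : ζ₀ ∈ closedBall ζ₀ s := mem_closedBall_self hs.le
  have hζ₀x : ζ₀ + x ∈ closedBall ζ₀ s := by simpa [dist_eq_norm] using hxs.le
  have heq := hsing _ (hK hζ₀) _ (hK hζ₀x) _ hK (infraconnected_closedBall hdense ζ₀ s) hζ₀ hζ₀x
  have hx₀ : x = 0 := by simpa using heq
  simp [hx₀] at hx

/-- **Trivial components force repelling cycles.** If every infraconnected component of
`K(φ)` is a singleton, then every cycle of `φ` is repelling:
`|(φ^p)′(ζ₀)| > 1` for every periodic point `ζ₀` of period `p`. -/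
theorem singleton_infraComponents_repelling {L : Type*} [NormedField L] [IsUltrametricDist L] [CompleteSpace L] [IsAlgClosed L]
    (hdense : ∀ r : ℝ, 0 < r → ∀ ε : ℝ, 0 < ε → ∃ x : L, x ≠ 0 ∧ |‖x‖ - r| < ε)
    (hres : ∀ q : ℚ, q ≠ 0 → ‖(q : L)‖ = 1)
    (φ : Polynomial L) (hd : 2 ≤ φ.natDegree)
    (hsing : ∀ z ∈ filledJulia φ, ∀ w ∈ filledJulia φ,
      ∀ S ⊆ filledJulia φ, Infraconnected S → z ∈ S → w ∈ S → z = w) :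
    ∀ (ζ₀ : L) (p : ℕ), 0 < p → (fun w => φ.eval w)^[p] ζ₀ = ζ₀ →
      1 < ‖(Polynomial.derivative (polyIter φ p)).eval ζ₀‖ :=
  singleton_infraComponents_repelling_general hdense φ hsing
end

section
/- Shape of the parameter regions: In the family φ_{α,β}(ζ) = ζ³ − 3α²ζ + β over L, the infraconnectedness locus C₃(L) (parameters with K infraconnected) equals B⁺₁(0) × B⁺₁(0); the shift locus contains all parameters outside C₃(L) with |α|³ ≠ |β|; and the set E^± of parameters with exactly the critical point ±α non-escaping is contained in {(α,β) : 1 < |α|³ = |β| and |∓2α³ + β| ≤ |α|}. -/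
open Polynomial Metric Set

/-!
The critical values are `φ(±α) = ∓2α³ + β`, and any `z` with `|z| > max(1, |α|)` and
`|z|³ > |β|` satisfies `|φ(z)| = |z|³`, so its orbit escapes. Outside the unit bidisk, if
`|α|³ ≠ |β|` both critical values have absolute value `max(|α|³, |β|) > max(1, |α|)` and
escape. If `|α|³ = |β|` then `|α| > 1`; the critical values differ by `4α³`, so one of them
has absolute value at least `|α|³` and escapes, while a non-escaping point is mapped into
`B⁺_{|α|}(0)`. Inside the bidisk `φ` maps `B⁺₁(0)` into itself.
-/

lemma tendsto_norm_iterate_atTop {X : Type*} [Norm X] {f : X → X} {U : Set X}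
    (hU : MapsTo f U U) {c : ℝ} (hc : 1 < c) (hf : ∀ x ∈ U, c * ‖x‖ ≤ ‖f x‖)
    {x : X} (hx : x ∈ U) (hx₀ : 0 < ‖x‖) :
    Filter.Tendsto (fun n => ‖f^[n] x‖) Filter.atTop Filter.atTop := by
  have hgrowth : ∀ n : ℕ, c ^ n * ‖x‖ ≤ ‖f^[n] x‖ := by
    intro n
    induction n with
    | zero => simp
    | succ n ih =>
      rw [Function.iterate_succ_apply', pow_succ', mul_assoc]
      exact (mul_le_mul_of_nonneg_left ih (by linarith)).trans
        (hf _ (hU.iterate n hx))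
  exact Filter.tendsto_atTop_mono hgrowth
    ((tendsto_pow_atTop_atTop_of_one_lt hc).atTop_mul_const hx₀)

section FilledJulia

variable {L : Type*} [NormedField L]

lemma eval_mem_filledJulia_iff (φ : L[X]) (z : L) :
    φ.eval z ∈ filledJulia φ ↔ z ∈ filledJulia φ := by
  simp only [filledJulia, Set.mem_ofPred_eq, ← Function.iterate_succ_apply]
  exact not_congr (Filter.tendsto_add_atTop_iff_nat (f := fun n => ‖(φ.eval ·)^[n] z‖) 1)

lemma closedBall_subset_filledJulia {φ : L[X]} {r : ℝ}
    (hφ : MapsTo φ.eval (closedBall 0 r) (closedBall 0 r)) :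
    closedBall 0 r ⊆ filledJulia φ := by
  intro z hz htendsto
  obtain ⟨n, hn⟩ := (htendsto.eventually_gt_atTop r).exists
  have := hφ.iterate n hz
  rw [mem_closedBall_zero_iff] at this
  linarith

end FilledJulia

section Cubic

variable {L : Type*} [NormedField L]

lemma cubic_eval (α β z : L) : (cubic α β).eval z = z ^ 3 - 3 * α ^ 2 * z + β := by
  simp [cubic]

lemma cubic_neg_left (α β : L) : cubic (-α) β = cubic α β := by
  simp [cubic]

lemma cubic_eval_self (α β : L) : (cubic α β).eval α = -(2 * α ^ 3) + β := by
  rw [cubic_eval]; ring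

lemma cubic_eval_neg_sub_cubic_eval_self (α β : L) :
    (cubic α β).eval (-α) - (cubic α β).eval α = 4 * α ^ 3 := by
  simp only [cubic_eval]; ring

lemma one_lt_norm_of_norm_pow_eq {α β : L} (hαβ : ‖α‖ ^ 3 = ‖β‖)
    (hout : ¬ (‖α‖ ≤ 1 ∧ ‖β‖ ≤ 1)) : 1 < ‖α‖ := by
  by_contra! hα
  exact hout ⟨hα, hαβ ▸ pow_le_one₀ (norm_nonneg α) hα⟩

variable [IsUltrametricDist L]

lemma mapsTo_cubic_closedBall_one {α β : L} (hα : ‖α‖ ≤ 1) (hβ : ‖β‖ ≤ 1) :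
    MapsTo (cubic α β).eval (closedBall 0 1) (closedBall 0 1) := by
  intro z hz
  dsimp only
  rw [mem_closedBall_zero_iff] at hz ⊢
  have hterm : ‖3 * α ^ 2 * z‖ ≤ 1 := by
    rw [norm_mul, norm_mul, norm_pow]
    exact mul_le_one₀ (mul_le_one₀ (IsUltrametricDist.norm_natCast_le_one L 3)
      (by positivity) (pow_le_one₀ (norm_nonneg α) hα)) (norm_nonneg z) hz
  rw [cubic_eval, sub_eq_add_neg]
  refine (IsUltrametricDist.norm_add_le_max _ _).trans (max_le ?_ hβ)
  refine (IsUltrametricDist.norm_add_le_max _ _).trans (max_le ?_ (by rwa [norm_neg]))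
  rw [norm_pow]
  exact pow_le_one₀ (norm_nonneg z) hz

lemma norm_cubic_eval_of_large {α β z : L} (h1 : 1 < ‖z‖) (hα : ‖α‖ < ‖z‖)
    (hβ : ‖β‖ < ‖z‖ ^ 3) : ‖(cubic α β).eval z‖ = ‖z‖ ^ 3 := by
  have hterm : ‖3 * α ^ 2 * z‖ < ‖z‖ ^ 3 := by
    rw [norm_mul, norm_mul, norm_pow]
    calc ‖(3 : L)‖ * ‖α‖ ^ 2 * ‖z‖ ≤ 1 * ‖α‖ ^ 2 * ‖z‖ := by
          gcongr
          exact_mod_cast IsUltrametricDist.norm_natCast_le_one L 3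
      _ = ‖α‖ ^ 2 * ‖z‖ := by ring
      _ < ‖z‖ ^ 2 * ‖z‖ := by gcongr
      _ = ‖z‖ ^ 3 := by ring
  have hrest : ‖-(3 * α ^ 2 * z) + β‖ < ‖z ^ 3‖ := by
    rw [norm_pow]
    refine (IsUltrametricDist.norm_add_le_max _ _).trans_lt (max_lt ?_ hβ)
    rwa [norm_neg]
  rw [cubic_eval, sub_eq_add_neg, add_assoc,
    IsUltrametricDist.norm_add_eq_max_of_norm_ne_norm hrest.ne', max_eq_left hrest.le,
    norm_pow]

lemma notMem_filledJulia_cubic_of_large {α β z : L} (h1 : 1 < ‖z‖) (hα : ‖α‖ < ‖z‖)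
    (hβ : ‖β‖ < ‖z‖ ^ 3) : z ∉ filledJulia (cubic α β) := by
  set r := ‖z‖
  have hr : 0 < r := one_pos.trans h1
  have hstep : ∀ w ∈ {w : L | r ≤ ‖w‖}, ‖(cubic α β).eval w‖ = ‖w‖ ^ 3 := fun w hw =>
    norm_cubic_eval_of_large (h1.trans_le hw) (hα.trans_le hw)
      (hβ.trans_le (pow_le_pow_left₀ hr.le hw 3))
  have hgrowth : ∀ w ∈ {w : L | r ≤ ‖w‖}, r ^ 2 * ‖w‖ ≤ ‖(cubic α β).eval w‖ := by
    intro w hw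
    rw [hstep w hw, pow_succ]
    exact mul_le_mul_of_nonneg_right (pow_le_pow_left₀ hr.le hw 2) (norm_nonneg w)
  have hmaps : MapsTo (cubic α β).eval {w | r ≤ ‖w‖} {w | r ≤ ‖w‖} := by
    intro w hw
    have : r ^ 2 * ‖w‖ ≥ ‖w‖ := le_mul_of_one_le_left (norm_nonneg w) (one_le_pow₀ h1.le)
    exact (le_trans hw this).trans (hgrowth w hw)
  exact not_not_intro (tendsto_norm_iterate_atTop hmaps (one_lt_pow₀ h1 two_ne_zero)
    hgrowth (le_refl r) hr)

lemma notMem_filledJulia_cubic_of_large_eval {α β z : L} (h1 : 1 < ‖(cubic α β).eval z‖)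
    (hα : ‖α‖ < ‖(cubic α β).eval z‖) (hβ : ‖β‖ < ‖(cubic α β).eval z‖ ^ 3) :
    z ∉ filledJulia (cubic α β) := by
  rw [← eval_mem_filledJulia_iff]
  exact notMem_filledJulia_cubic_of_large h1 hα hβ

lemma norm_cubic_eval_le_of_mem_filledJulia {α β z : L} (hz : z ∈ filledJulia (cubic α β))
    (hα : 1 < ‖α‖) (hβ : ‖β‖ = ‖α‖ ^ 3) : ‖(cubic α β).eval z‖ ≤ ‖α‖ := by
  by_contra! h
  refine notMem_filledJulia_cubic_of_large_eval (hα.trans h) h ?_ hz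
  rw [hβ]
  gcongr

lemma notMem_filledJulia_cubic_self (h2 : ‖(2 : L)‖ = 1) {α β : L} (hαβ : ‖α‖ ^ 3 ≠ ‖β‖)
    (hout : ¬ (‖α‖ ≤ 1 ∧ ‖β‖ ≤ 1)) : α ∉ filledJulia (cubic α β) := by
  have hnorm : ‖(cubic α β).eval α‖ = max (‖α‖ ^ 3) ‖β‖ := by
    have h2α : ‖-(2 * α ^ 3)‖ = ‖α‖ ^ 3 := by rw [norm_neg, norm_mul, norm_pow, h2, one_mul]
    rw [cubic_eval_self, IsUltrametricDist.norm_add_eq_max_of_norm_ne_norm (h2α ▸ hαβ), h2α]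
  have h1 : 1 < max (‖α‖ ^ 3) ‖β‖ := by
    rcases le_or_gt ‖α‖ 1 with hα | hα
    · exact lt_max_of_lt_right (lt_of_not_ge fun hβ => hout ⟨hα, hβ⟩)
    · exact lt_max_of_lt_left (one_lt_pow₀ hα three_ne_zero)
  refine notMem_filledJulia_cubic_of_large_eval (hnorm ▸ h1) ?_ ?_
  · rw [hnorm]
    rcases le_or_gt ‖α‖ 1 with hα | hα
    · exact hα.trans_lt h1
    · exact lt_max_of_lt_left (lt_self_pow₀ hα (by norm_num))
  · rw [hnorm]
    exact (le_max_right _ _).trans_lt (lt_self_pow₀ h1 (by norm_num))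

lemma notMem_filledJulia_cubic_self_or_neg (h2 : ‖(2 : L)‖ = 1) {α β : L}
    (hαβ : ‖α‖ ^ 3 = ‖β‖) (hα : 1 < ‖α‖) :
    α ∉ filledJulia (cubic α β) ∨ -α ∉ filledJulia (cubic α β) := by
  have hescape : ∀ z : L, ‖α‖ ^ 3 ≤ ‖(cubic α β).eval z‖ → z ∉ filledJulia (cubic α β) := by
    intro z hz
    have hαz : ‖α‖ < ‖(cubic α β).eval z‖ := (lt_self_pow₀ hα (by norm_num)).trans_le hz
    refine notMem_filledJulia_cubic_of_large_eval (hα.trans hαz) hαz ?_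
    rw [← hαβ]
    gcongr
  have hsplit : ‖α‖ ^ 3 ≤ max ‖(cubic α β).eval (-α)‖ ‖(cubic α β).eval α‖ :=
    calc ‖α‖ ^ 3 = ‖(cubic α β).eval (-α) - (cubic α β).eval α‖ := by
          rw [cubic_eval_neg_sub_cubic_eval_self, norm_mul, norm_pow,
            show (4 : L) = 2 * 2 by norm_num, norm_mul, h2, one_mul, one_mul]
      _ ≤ _ := by
          simpa only [sub_eq_add_neg, norm_neg] using
            IsUltrametricDist.norm_add_le_max ((cubic α β).eval (-α)) (-(cubic α β).eval α)
  rcases le_max_iff.mp hsplit with h | h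
  · exact Or.inr (hescape _ h)
  · exact Or.inl (hescape _ h)

lemma critical_points_mem_filledJulia_cubic_iff (h2 : ‖(2 : L)‖ = 1) {α β : L} :
    (α ∈ filledJulia (cubic α β) ∧ -α ∈ filledJulia (cubic α β)) ↔ ‖α‖ ≤ 1 ∧ ‖β‖ ≤ 1 := by
  refine ⟨fun hmem => ?_, fun ⟨hα, hβ⟩ => ?_⟩
  · by_contra hout
    by_cases hαβ : ‖α‖ ^ 3 = ‖β‖
    · rcases notMem_filledJulia_cubic_self_or_neg h2 hαβ
        (one_lt_norm_of_norm_pow_eq hαβ hout) with h | h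
      exacts [h hmem.1, h hmem.2]
    · exact notMem_filledJulia_cubic_self h2 hαβ hout hmem.1
  · have hK := closedBall_subset_filledJulia (mapsTo_cubic_closedBall_one hα hβ)
    exact ⟨hK (by simpa using hα), hK (by simpa using hα)⟩

lemma critical_points_notMem_filledJulia_cubic (h2 : ‖(2 : L)‖ = 1) {α β : L}
    (hαβ : ‖α‖ ^ 3 ≠ ‖β‖) (hout : ¬ (‖α‖ ≤ 1 ∧ ‖β‖ ≤ 1)) :
    α ∉ filledJulia (cubic α β) ∧ -α ∉ filledJulia (cubic α β) := by
  refine ⟨notMem_filledJulia_cubic_self h2 hαβ hout, ?_⟩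
  rw [← cubic_neg_left]
  exact notMem_filledJulia_cubic_self h2 (by rwa [norm_neg]) (by rwa [norm_neg])

lemma norm_cubic_critical_value_of_mem_filledJulia (h2 : ‖(2 : L)‖ = 1) {α β : L}
    (hα : α ∈ filledJulia (cubic α β)) (hnα : -α ∉ filledJulia (cubic α β)) :
    1 < ‖α‖ ^ 3 ∧ ‖α‖ ^ 3 = ‖β‖ ∧ ‖-(2 * α ^ 3) + β‖ ≤ ‖α‖ := by
  have hout : ¬ (‖α‖ ≤ 1 ∧ ‖β‖ ≤ 1) := fun h =>
    hnα ((critical_points_mem_filledJulia_cubic_iff h2).mpr h).2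
  have hαβ : ‖α‖ ^ 3 = ‖β‖ := by
    by_contra hαβ
    exact notMem_filledJulia_cubic_self h2 hαβ hout hα
  have h1 := one_lt_norm_of_norm_pow_eq hαβ hout
  refine ⟨one_lt_pow₀ h1 three_ne_zero, hαβ, ?_⟩
  rw [← cubic_eval_self]
  exact norm_cubic_eval_le_of_mem_filledJulia hα h1 hαβ.symm

end Cubic

theorem cubic_parameter_regions_general {L : Type*} [NormedField L] [IsUltrametricDist L]
    (hres : ∀ q : ℚ, q ≠ 0 → ‖(q : L)‖ = 1) :
    ({q : L × L | q.1 ∈ filledJulia (cubic q.1 q.2) ∧ -q.1 ∈ filledJulia (cubic q.1 q.2)}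
        = Metric.closedBall (0 : L) 1 ×ˢ Metric.closedBall (0 : L) 1) ∧
    ({q : L × L | q.1 ∉ filledJulia (cubic q.1 q.2) ∧ -q.1 ∉ filledJulia (cubic q.1 q.2)}
        ⊇ {q : L × L | ¬ (q.1 ∈ filledJulia (cubic q.1 q.2) ∧
              -q.1 ∈ filledJulia (cubic q.1 q.2)) ∧ ‖q.1‖ ^ 3 ≠ ‖q.2‖}) ∧
    ({q : L × L | q.1 ∈ filledJulia (cubic q.1 q.2) ∧ -q.1 ∉ filledJulia (cubic q.1 q.2)}
        ⊆ {q : L × L | 1 < ‖q.1‖ ^ 3 ∧ ‖q.1‖ ^ 3 = ‖q.2‖ ∧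
              ‖-(2 * q.1 ^ 3) + q.2‖ ≤ ‖q.1‖}) ∧
    ({q : L × L | -q.1 ∈ filledJulia (cubic q.1 q.2) ∧ q.1 ∉ filledJulia (cubic q.1 q.2)}
        ⊆ {q : L × L | 1 < ‖q.1‖ ^ 3 ∧ ‖q.1‖ ^ 3 = ‖q.2‖ ∧
              ‖2 * q.1 ^ 3 + q.2‖ ≤ ‖q.1‖}) := by
  have h2 : ‖(2 : L)‖ = 1 := by simpa using hres 2 two_ne_zero
  refine ⟨?_, ?_, ?_, ?_⟩
  · ext ⟨α, β⟩
    simpa using critical_points_mem_filledJulia_cubic_iff h2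
  · rintro ⟨α, β⟩ ⟨hnot, hαβ⟩
    exact critical_points_notMem_filledJulia_cubic h2 hαβ
      (mt (critical_points_mem_filledJulia_cubic_iff h2).mpr hnot)
  · rintro ⟨α, β⟩ ⟨hα, hnα⟩
    exact norm_cubic_critical_value_of_mem_filledJulia h2 hα hnα
  · rintro ⟨α, β⟩ ⟨hnα, hα⟩
    have := norm_cubic_critical_value_of_mem_filledJulia h2 (α := -α)
      (by rwa [cubic_neg_left]) (by rwa [cubic_neg_left, neg_neg])
    simpa [Odd.neg_pow (by decide : Odd 3)] using this

/-- **Shape of the parameter regions for cubics.** The infraconnectedness locus is the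
unit bidisk; the shift locus contains all parameters outside it with `|α|³ ≠ |β|`; and
the loci `E^±` are contained in `{1 < |α|³ = |β|, |∓2α³ + β| ≤ |α|}`. -/
theorem cubic_parameter_regions {L : Type*} [NormedField L] [IsUltrametricDist L] [CompleteSpace L] [IsAlgClosed L]
    (hdense : ∀ r : ℝ, 0 < r → ∀ ε : ℝ, 0 < ε → ∃ x : L, x ≠ 0 ∧ |‖x‖ - r| < ε)
    (hres : ∀ q : ℚ, q ≠ 0 → ‖(q : L)‖ = 1) :
    ({q : L × L | q.1 ∈ filledJulia (cubic q.1 q.2) ∧ -q.1 ∈ filledJulia (cubic q.1 q.2)}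
        = Metric.closedBall (0 : L) 1 ×ˢ Metric.closedBall (0 : L) 1) ∧
    ({q : L × L | q.1 ∉ filledJulia (cubic q.1 q.2) ∧ -q.1 ∉ filledJulia (cubic q.1 q.2)}
        ⊇ {q : L × L | ¬ (q.1 ∈ filledJulia (cubic q.1 q.2) ∧
              -q.1 ∈ filledJulia (cubic q.1 q.2)) ∧ ‖q.1‖ ^ 3 ≠ ‖q.2‖}) ∧
    ({q : L × L | q.1 ∈ filledJulia (cubic q.1 q.2) ∧ -q.1 ∉ filledJulia (cubic q.1 q.2)}
        ⊆ {q : L × L | 1 < ‖q.1‖ ^ 3 ∧ ‖q.1‖ ^ 3 = ‖q.2‖ ∧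
              ‖-(2 * q.1 ^ 3) + q.2‖ ≤ ‖q.1‖}) ∧
    ({q : L × L | -q.1 ∈ filledJulia (cubic q.1 q.2) ∧ q.1 ∉ filledJulia (cubic q.1 q.2)}
        ⊆ {q : L × L | 1 < ‖q.1‖ ^ 3 ∧ ‖q.1‖ ^ 3 = ‖q.2‖ ∧
              ‖2 * q.1 ^ 3 + q.2‖ ≤ ‖q.1‖}) :=
  cubic_parameter_regions_general hres
end
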